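/- arXiv:2309.04121 — 9 statements merged into one kernel-verified Lean document; each statement's English description precedes it below -/
import Mathlib

section
/- Let A, B, C ∈ F_{q²} with B ≠ 0 and set D = Tr(A)² − 4N(B). If there does not exist θ ∈ F_{q²} such that Tr(A)·θ^q + 2Bθ + C = 0, then D = 0 and Σ_{w ∈ F_{q²}} χ(A·w^{q+1} + B·w² + C·w) = 0. -/
/-!
Write `σ` for `x ↦ x ^ q`, so that the phase is `f w = A σ(w) w + B w² + C w` and `χ` is a
nontrivial additive character with `χ ∘ σ = χ`. Because `χ (σ t) = χ t`, the cross term of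
`f (u + v) - f u - f v` contributes `χ (L u · v)`, where `L θ = Tr(A) σ(θ) + 2 B θ` is additive;
Weil differencing then gives `|S|² = q² ∑_{L u = 0} χ (f u)`.

The hypothesis says that `-C` is not in the image of `L`, so `L` has a kernel vector `θ₀ ≠ 0`,
and `L θ₀ = 0` together with its conjugate gives `D · N(θ₀) = 0`. On `ker L` the map
`u ↦ χ (f u)` is a character. It is nontrivial: on `θ₀ F_q` it is `c ↦ χ (C θ₀ c)`, because
the quadratic part has trace zero, and `Tr(C θ₀) ≠ 0` since otherwise additive Hilbert 90
produces a solution of `Tr(A) θ^q + 2 B θ + C = 0`. So the kernel sum, and with it `S`, vanishes.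
-/

open Finset

section Differencing

variable {R : Type*} [CommRing R] [Fintype R] [DecidableEq R] {ψ : AddChar R ℂ} {f : R → R}
  {L : R →+ R}

theorem AddChar.sum_mul_conj_sum_of_map_add (hψ : ψ.IsPrimitive)
    (hf : ∀ u v, ψ (f (u + v)) = ψ (f u) * ψ (f v) * ψ (L u * v)) :
    (∑ w, ψ (f w)) * starRingEnd ℂ (∑ w, ψ (f w)) =
      Fintype.card R * ∑ u with L u = 0, ψ (f u) := by
  have hrow : ∀ v, ∑ w, ψ (f w) * starRingEnd ℂ (ψ (f v)) = ∑ u, ψ (f u) * ψ (v * L u) := by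
    intro v
    rw [← Equiv.sum_comp (Equiv.addRight v)]
    refine Fintype.sum_congr _ _ fun u => ?_
    have hinv : ψ (f v) * ψ (-f v) = 1 := by
      rw [← AddChar.map_add_eq_mul, add_neg_cancel, AddChar.map_zero_eq_one]
    rw [Equiv.coe_addRight, hf, ← AddChar.map_neg_eq_conj, mul_comm v]
    linear_combination ψ (f u) * ψ (L u * v) * hinv
  rw [map_sum, sum_mul_sum, sum_comm, Fintype.sum_congr _ _ hrow, sum_comm, sum_filter, mul_sum]
  refine Fintype.sum_congr _ _ fun u => ?_
  rw [← mul_sum, AddChar.sum_mulShift _ hψ]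
  split_ifs <;> simp [mul_comm]

theorem AddChar.sum_ker_eq_zero_of_map_add
    (hf : ∀ u v, ψ (f (u + v)) = ψ (f u) * ψ (f v) * ψ (L u * v)) {u₀ : R} (hu₀ : L u₀ = 0)
    (hfu₀ : ψ (f u₀) ≠ 1) : ∑ u with L u = 0, ψ (f u) = 0 := by
  have hshift : ∑ u with L u = 0, ψ (f u) = ψ (f u₀) * ∑ u with L u = 0, ψ (f u) := by
    rw [sum_filter, mul_sum, ← Equiv.sum_comp (Equiv.addRight u₀)]
    refine Fintype.sum_congr _ _ fun u => ?_
    simp only [Equiv.coe_addRight, map_add, hu₀, add_zero]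
    split_ifs with hu
    · rw [hf, hu, zero_mul, AddChar.map_zero_eq_one, mul_one, mul_comm]
    · rw [mul_zero]
  have hprod : (1 - ψ (f u₀)) * ∑ u with L u = 0, ψ (f u) = 0 := by
    rw [one_sub_mul, ← hshift, sub_self]
  exact (mul_eq_zero.1 hprod).resolve_left (sub_ne_zero.2 hfu₀.symm)

theorem AddChar.sum_eq_zero_of_map_add (hψ : ψ.IsPrimitive)
    (hf : ∀ u v, ψ (f (u + v)) = ψ (f u) * ψ (f v) * ψ (L u * v)) {u₀ : R} (hu₀ : L u₀ = 0)
    (hfu₀ : ψ (f u₀) ≠ 1) : ∑ w, ψ (f w) = 0 := by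
  have h := AddChar.sum_mul_conj_sum_of_map_add hψ hf
  rw [AddChar.sum_ker_eq_zero_of_map_add hf hu₀ hfu₀, mul_zero, Complex.mul_conj,
    Complex.ofReal_eq_zero, Complex.normSq_eq_zero] at h
  exact h

end Differencing

section Involution

variable {K : Type*} [Field K] {σ : K →+* K} {A B C θ θ₀ : K}

def polar (σ : K →+* K) (A B : K) : K →+ K :=
  AddMonoidHom.mk' (fun θ => (σ A + A) * σ θ + 2 * B * θ) fun x y => by simp only [map_add]; ring

@[simp] lemma polar_apply : polar σ A B θ = (σ A + A) * σ θ + 2 * B * θ := rfl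

def phase (σ : K →+* K) (A B C w : K) : K := A * (σ w * w) + B * w ^ 2 + C * w

lemma polar_mul_of_map_eq {c : K} (hc : σ c = c) : polar σ A B (θ * c) = polar σ A B θ * c := by
  simp only [polar_apply, map_mul, hc]; ring

lemma exists_polar_eq_zero [Finite K] (hno : ¬∃ θ, polar σ A B θ + C = 0) :
    ∃ θ₀ ≠ 0, polar σ A B θ₀ = 0 := by
  by_contra! h
  have hinj : Function.Injective (polar σ A B) := (injective_iff_map_eq_zero _).2 fun θ hθ =>
    by_contra fun hne => h θ hne hθ
  obtain ⟨θ, hθ⟩ := Finite.injective_iff_surjective.1 hinj (-C)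
  exact hno ⟨θ, by rw [hθ, neg_add_cancel]⟩

lemma map_add_self_of_involutive (hσ : Function.Involutive σ) (x : K) : σ (σ x + x) = σ x + x := by
  rw [map_add, hσ x, add_comm]

lemma polar_conj_eq_zero (hσ : Function.Involutive σ) (h : polar σ A B θ = 0) :
    (σ A + A) * θ + 2 * σ B * σ θ = 0 := by
  have := congrArg σ h
  rw [polar_apply, map_add, map_mul, map_mul, map_mul, map_add_self_of_involutive hσ, hσ, map_ofNat,
    map_zero] at this
  linear_combination this

lemma sq_add_sub_four_mul_eq_zero (hσ : Function.Involutive σ) (hθ₀ : θ₀ ≠ 0)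
    (h : polar σ A B θ₀ = 0) : (σ A + A) ^ 2 - 4 * (σ B * B) = 0 := by
  have hconj := polar_conj_eq_zero hσ h
  rw [polar_apply] at h
  have hprod : ((σ A + A) ^ 2 - 4 * (σ B * B)) * (σ θ₀ * θ₀) = 0 := by
    linear_combination (σ A + A) * θ₀ * h - 2 * B * θ₀ * hconj
  exact (mul_eq_zero.1 hprod).resolve_right (mul_ne_zero ((map_ne_zero σ).2 hθ₀) hθ₀)

lemma add_ne_zero_of_polar_eq_zero [NeZero (2 : K)] (hB : B ≠ 0) (hθ₀ : θ₀ ≠ 0)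
    (h : polar σ A B θ₀ = 0) : σ A + A ≠ 0 := by
  intro hT
  rw [polar_apply, hT, zero_mul, zero_add] at h
  exact mul_ne_zero (mul_ne_zero two_ne_zero hB) hθ₀ h

lemma map_mul_add_mul_ne_zero [NeZero (2 : K)] (hσ : Function.Involutive σ) (hB : B ≠ 0)
    (hθ₀ : θ₀ ≠ 0) (h : polar σ A B θ₀ = 0) (hno : ¬∃ θ, polar σ A B θ + C = 0) :
    σ (C * θ₀) + C * θ₀ ≠ 0 := by
  intro hβ
  -- With `θ = θ₀ z` the equation reads `(σ A + A) σ θ₀ (σ z - z) = -C`, which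
  -- `z = C / (2 (σ A + A) σ θ₀)` solves because `σ (C θ₀) = -C θ₀`.
  have hT := add_ne_zero_of_polar_eq_zero hB hθ₀ h
  have hσθ₀ : σ θ₀ ≠ 0 := (map_ne_zero σ).2 hθ₀
  refine hno ⟨C * θ₀ / (2 * (σ A + A) * σ θ₀), ?_⟩
  rw [map_mul] at hβ
  rw [polar_apply] at h ⊢
  rw [map_div₀, map_mul, map_mul, map_mul, map_add_self_of_involutive hσ, hσ, map_ofNat]
  field_simp
  linear_combination C * θ₀ * h + (σ A + A) * σ θ₀ * hβ

variable {ψ : AddChar K ℂ}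

lemma addChar_add_map (hψσ : ∀ x, ψ (σ x) = ψ x) (x : K) : ψ (x + σ x) = ψ x ^ 2 := by
  rw [AddChar.map_add_eq_mul, hψσ, sq]

lemma addChar_map_sub_self (hψσ : ∀ x, ψ (σ x) = ψ x) (x : K) : ψ (σ x - x) = 1 := by
  rw [sub_eq_add_neg, AddChar.map_add_eq_mul, hψσ, ← AddChar.map_add_eq_mul, add_neg_cancel,
    AddChar.map_zero_eq_one]

lemma addChar_eq_one_of_map_eq_neg [NeZero (2 : K)] (hψσ : ∀ x, ψ (σ x) = ψ x) {y : K}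
    (hy : σ y = -y) : ψ y = 1 := by
  have hhalf : σ (y / 2) = -(y / 2) := by rw [map_div₀, hy, map_ofNat, neg_div]
  calc ψ y = ψ (y / 2 + y / 2) := by rw [add_halves]
    _ = ψ (y / 2 + σ (y / 2)) := by rw [AddChar.map_add_eq_mul, AddChar.map_add_eq_mul, hψσ]
    _ = 1 := by rw [hhalf, add_neg_cancel, AddChar.map_zero_eq_one]

lemma exists_map_eq_self_addChar_mul_ne_one [NeZero (2 : K)] (hσ : Function.Involutive σ)
    (hψ : ψ ≠ 1) (hψσ : ∀ x, ψ (σ x) = ψ x) {β : K} (hβ : σ β + β ≠ 0) :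
    ∃ c, σ c = c ∧ ψ (β * c) ≠ 1 := by
  obtain ⟨x, hx⟩ := AddChar.ne_one_iff.1 hψ
  set y := x / 2
  set c := (y + σ y) / (σ β + β) with hc_def
  have hc : σ c = c := by
    rw [map_div₀, map_add_self_of_involutive hσ, map_add, hσ, add_comm (σ y)]
  have hsum : β * c + σ (β * c) = y + σ y := by
    rw [map_mul, hc, ← add_mul, add_comm, hc_def, mul_div_cancel₀ _ hβ]
  have key : ψ (β * c) ^ 2 = ψ x := by
    rw [← addChar_add_map hψσ, hsum, addChar_add_map hψσ, sq, ← AddChar.map_add_eq_mul, add_halves]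
  refine ⟨c, hc, fun h => hx ?_⟩
  rw [← key, h, one_pow]

lemma addChar_phase_add (hσ : Function.Involutive σ) (hψσ : ∀ x, ψ (σ x) = ψ x) (u v : K) :
    ψ (phase σ A B C (u + v)) =
      ψ (phase σ A B C u) * ψ (phase σ A B C v) * ψ (polar σ A B u * v) := by
  set t := σ A * σ u * v
  have hsplit : phase σ A B C (u + v) =
      phase σ A B C u + phase σ A B C v + polar σ A B u * v + (σ t - t) := by
    simp only [phase, polar_apply, t, map_add, map_mul, hσ _]
    ring
  rw [hsplit, AddChar.map_add_eq_mul, addChar_map_sub_self hψσ, mul_one, AddChar.map_add_eq_mul,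
    AddChar.map_add_eq_mul]

lemma addChar_phase_mul_of_map_eq [NeZero (2 : K)] (hσ : Function.Involutive σ)
    (hψσ : ∀ x, ψ (σ x) = ψ x) (h : polar σ A B θ₀ = 0) {c : K} (hc : σ c = c) :
    ψ (phase σ A B C (θ₀ * c)) = ψ (C * θ₀ * c) := by
  set α := A * (σ θ₀ * θ₀) + B * θ₀ ^ 2
  have hα : σ α + α = 0 := by
    have hconj := polar_conj_eq_zero hσ h
    rw [polar_apply] at h
    refine (mul_eq_zero.1 (?_ : 2 * (σ α + α) = 0)).resolve_left two_ne_zero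
    simp only [α, map_add, map_mul, map_pow, hσ θ₀]
    linear_combination θ₀ * h + σ θ₀ * hconj
  have hαc : σ (α * c ^ 2) = -(α * c ^ 2) := by
    rw [map_mul, map_pow, hc, eq_neg_of_add_eq_zero_left hα, neg_mul]
  have hsplit : phase σ A B C (θ₀ * c) = α * c ^ 2 + C * θ₀ * c := by
    simp only [phase, α, map_mul, hc]; ring
  rw [hsplit, AddChar.map_add_eq_mul, addChar_eq_one_of_map_eq_neg hψσ hαc, one_mul]

theorem discr_eq_zero_and_sum_addChar_phase_eq_zero [Fintype K] [NeZero (2 : K)]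
    (hσ : Function.Involutive σ) (hψ : ψ ≠ 1) (hψσ : ∀ x, ψ (σ x) = ψ x) (hB : B ≠ 0)
    (hno : ¬∃ θ, (σ A + A) * σ θ + 2 * B * θ + C = 0) :
    (σ A + A) ^ 2 - 4 * (σ B * B) = 0 ∧ ∑ w, ψ (phase σ A B C w) = 0 := by
  classical
  obtain ⟨θ₀, hθ₀, h⟩ := exists_polar_eq_zero hno
  refine ⟨sq_add_sub_four_mul_eq_zero hσ hθ₀ h, ?_⟩
  obtain ⟨c, hc, hψc⟩ := exists_map_eq_self_addChar_mul_ne_one hσ hψ hψσ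
    (map_mul_add_mul_ne_zero hσ hB hθ₀ h hno)
  refine AddChar.sum_eq_zero_of_map_add (AddChar.IsPrimitive.of_ne_one hψ)
    (addChar_phase_add hσ hψσ) (u₀ := θ₀ * c) ?_ ?_
  · rw [polar_mul_of_map_eq hc, h, zero_mul]
  · rwa [addChar_phase_mul_of_map_eq hσ hψσ h hc]

end Involution

section PrimeField

variable {p : ℕ} [Fact p.Prime] {K : Type*} [Field K] [Fintype K] [CharP K p]

attribute [local instance] ZMod.algebra

lemma trace_pow_prime_pow (x : K) (k : ℕ) :
    Algebra.trace (ZMod p) K (x ^ p ^ k) = Algebra.trace (ZMod p) K x := by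
  have h := Algebra.trace_eq_of_algEquiv
    (FiniteField.frobeniusAlgEquivOfAlgebraic (ZMod p) K ^ k) x
  rwa [AlgEquiv.coe_pow, FiniteField.coe_frobeniusAlgEquivOfAlgebraic_iterate, ZMod.card] at h

lemma algebraMap_trace_eq_sum_pow_prime {m : ℕ} (hK : Fintype.card K = p ^ m) (x : K) :
    algebraMap (ZMod p) K (Algebra.trace (ZMod p) K x) = ∑ i ∈ range m, x ^ p ^ i := by
  have hm : Module.finrank (ZMod p) K = m := by
    have := Module.card_eq_pow_finrank (K := ZMod p) (V := K)
    rw [hK, ZMod.card] at this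
    exact (Nat.pow_right_injective (Fact.out : p.Prime).two_le this).symm
  rw [FiniteField.algebraMap_trace_eq_sum_pow, hm, Nat.card_zmod]

lemma exists_addChar_eq_of_trace {m : ℕ} (hK : Fintype.card K = p ^ m) {ζ : ℂ}
    (hζ : IsPrimitiveRoot ζ p) {χ : K → ℂ}
    (hχ : ∀ x : K, ∀ k : ℕ, (k : K) = ∑ i ∈ range m, x ^ p ^ i → χ x = ζ ^ k) :
    ∃ ψ : AddChar K ℂ, ⇑ψ = χ ∧ ψ ≠ 1 ∧ ∀ x k, ψ (x ^ p ^ k) = ψ x := by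
  set ψ : AddChar K ℂ := (AddChar.zmodChar p hζ.pow_eq_one).compAddMonoidHom
    (Algebra.trace (ZMod p) K).toAddMonoidHom
  have hψ : ∀ x, ψ x = ζ ^ (Algebra.trace (ZMod p) K x).val := fun x => rfl
  refine ⟨ψ, funext fun x => ?_, ?_, fun x k => by rw [hψ, hψ, trace_pow_prime_pow]⟩
  · refine (hχ x _ ?_).symm
    rw [← algebraMap_trace_eq_sum_pow_prime hK, ZMod.natCast_val]
    rfl
  · obtain ⟨x, hx⟩ := Algebra.trace_surjective (ZMod p) K 1
    refine AddChar.ne_one_iff.2 ⟨x, ?_⟩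
    rw [hψ, hx, ZMod.val_one, pow_one]
    exact hζ.ne_one (Fact.out : p.Prime).one_lt

end PrimeField

theorem stmt0_general (p n q : ℕ) (hp : p.Prime) (hp2 : p ≠ 2)
    (hq : q = p ^ n)
    (K : Type) [Field K] [Fintype K] (hK : Fintype.card K = q ^ 2)
    (ζ : ℂ) (hζ : IsPrimitiveRoot ζ p)
    (χ : K → ℂ)
    (hχ : ∀ x : K, ∀ m : ℕ, (m : K) = ∑ i ∈ Finset.range (2 * n), x ^ p ^ i →
      χ x = ζ ^ m)
    (A B C : K) (hB : B ≠ 0)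
    (hno : ¬ ∃ θ : K, (A ^ q + A) * θ ^ q + 2 * B * θ + C = 0) :
    (A ^ q + A) ^ 2 - 4 * B ^ (q + 1) = 0 ∧
      ∑ w : K, χ (A * w ^ (q + 1) + B * w ^ 2 + C * w) = 0 := by
  have : Fact p.Prime := ⟨hp⟩
  have hKp : Fintype.card K = p ^ (2 * n) := by rw [hK, hq, ← pow_mul, mul_comm]
  have : CharP K p := charP_of_card_eq_prime_pow hKp
  have : NeZero (2 : K) := ⟨Ring.two_ne_zero (by rwa [ringChar.eq K p])⟩
  obtain ⟨ψ, rfl, hψ, hψσ⟩ := exists_addChar_eq_of_trace hKp hζ hχ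
  have hfrob : ∀ x, iterateFrobenius K p n x = x ^ q := fun x => by rw [iterateFrobenius_def, hq]
  have hinv : Function.Involutive (iterateFrobenius K p n) := fun x => by
    rw [hfrob, hfrob, ← pow_mul, ← sq, ← hK, FiniteField.pow_card]
  have key := discr_eq_zero_and_sum_addChar_phase_eq_zero hinv hψ (fun x => hψσ x n) hB
    (by simpa only [hfrob] using hno)
  simpa only [phase, hfrob, ← pow_succ] using key

/-- Let `A, B, C ∈ F_{q²}` with `B ≠ 0` and set `D = Tr(A)² − 4N(B)`.
If there does not exist `θ ∈ F_{q²}` with `Tr(A)·θ^q + 2Bθ + C = 0`, then `D = 0` and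
`∑_{w ∈ F_{q²}} χ(A·w^{q+1} + B·w² + C·w) = 0`.
Here `K` plays the role of `F_{q²}`, `Tr(x) = x^q + x`, `N(x) = x^{q+1}`, and `χ` is the
canonical additive character of `F_{q²}`, `χ(x) = ζ_p^{Tr_{F_{q²}/F_p}(x)}` where the absolute
trace is `∑_{i < 2n} x^(p^i)` (an element of the prime field, identified with a natural
number `m < p` via the canonical map `ℕ → K`). -/
theorem stmt0 (p n q : ℕ) (hp : p.Prime) (hp2 : p ≠ 2) (hn : 0 < n)
    (hq : q = p ^ n)
    (K : Type) [Field K] [Fintype K] (hK : Fintype.card K = q ^ 2)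
    (ζ : ℂ) (hζ : IsPrimitiveRoot ζ p)
    (χ : K → ℂ)
    (hχ : ∀ x : K, ∀ m : ℕ, (m : K) = ∑ i ∈ Finset.range (2 * n), x ^ p ^ i →
      χ x = ζ ^ m)
    (A B C : K) (hB : B ≠ 0)
    (hno : ¬ ∃ θ : K, (A ^ q + A) * θ ^ q + 2 * B * θ + C = 0) :
    (A ^ q + A) ^ 2 - 4 * B ^ (q + 1) = 0 ∧
      ∑ w : K, χ (A * w ^ (q + 1) + B * w ^ 2 + C * w) = 0 :=
  stmt0_general p n q hp hp2 hq K hK ζ hζ χ hχ A B C hB hno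
end

section
/- Let A, B, C ∈ F_{q²} with B ≠ 0 and suppose Tr(A)² ≠ 4N(B), so D = Tr(A)² − 4N(B) ≠ 0. Then, with θ = (−Tr(A)·C^q + 2B^q·C)/(Tr(A)² − 4N(B)), one has Σ_{w ∈ F_{q²}} χ(A·w^{q+1} + B·w² + C·w) = −η(D) · q · χ(−A·θ^{q+1} − B·θ²). -/
/-
Let `F = {x : x ^ q = x}`, the subfield of `K` with `q` elements, so that `Tr = Tr_{K/F}` is
`w ↦ w + w ^ q` and `N = N_{K/F}` is `w ↦ w ^ (q + 1)`. The canonical character factors as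
`χ = ψ ∘ Tr` with `ψ` the canonical character of `F`. Translating `w` by the stationary point `θ`
removes the linear term and splits off the factor `χ(-A θ^{q+1} - B θ²)`. Choosing `δ ≠ 0` with
`δ ^ q = -δ` and writing `w = x + δ y` with `x, y ∈ F`, the remaining `Tr (A w^{q+1} + B w²)`
becomes the binary quadratic form `(Tr A + Tr B) x² + 2 Tr(δ B) x y + δ² (Tr B - Tr A) y²` over
`F`, of discriminant `4 δ² D`. Completing the square and using `G² = η(-1) q` for the quadratic
Gauss sum `G` of `F`, such a form has character sum `η(discriminant) q`; since `δ²` is not a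
square in `F`, this is `-η(D) q`.
-/

open Finset

section QuadraticGaussSum

variable {F : Type*} [Field F] [Fintype F] [DecidableEq F]

variable (F) in
noncomputable abbrev quadraticCharℂ : MulChar F ℂ :=
  (quadraticChar F).ringHomComp (Int.castRingHom ℂ)

theorem sum_addChar_mul_sq (hF : ringChar F ≠ 2) {ψ : AddChar F ℂ} (hψ : ψ.IsPrimitive)
    {a : F} (ha : a ≠ 0) :
    ∑ x, ψ (a * x ^ 2) = quadraticChar F a * gaussSum (quadraticCharℂ F) ψ := by
  have hsqrts : ∑ x, ψ (a * x ^ 2) = ∑ y, ((quadraticChar F y : ℂ) + 1) * ψ (a * y) := by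
    rw [← sum_fiberwise_of_maps_to (g := fun x => x ^ 2) (t := univ) (fun _ _ => mem_univ _)]
    refine Fintype.sum_congr _ _ fun y => ?_
    rw [← Int.cast_one, ← Int.cast_add, ← quadraticChar_card_sqrts hF y, Int.cast_natCast,
      ← nsmul_eq_mul, ← sum_const]
    refine sum_congr (by ext; simp) fun x hx => ?_
    rw [show x ^ 2 = y by simpa using hx]
  have hψa : ∑ y, ψ (a * y) = 0 := by
    simpa using AddChar.sum_eq_zero_of_ne_one (hψ ha)
  have hshift := gaussSum_mulShift (quadraticCharℂ F) ψ (Units.mk0 a ha)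
  have hsq : (quadraticChar F a : ℂ) ^ 2 = 1 := by exact_mod_cast quadraticChar_sq_one ha
  simp only [Units.val_mk0, MulChar.ringHomComp_apply, eq_intCast] at hshift
  rw [hsqrts, ← hshift, ← mul_assoc, ← sq, hsq, one_mul, gaussSum]
  simp [add_mul, sum_add_distrib, hψa, AddChar.mulShift_apply]

theorem gaussSum_quadraticCharℂ_sq (hF : ringChar F ≠ 2) {ψ : AddChar F ℂ}
    (hψ : ψ.IsPrimitive) :
    gaussSum (quadraticCharℂ F) ψ ^ 2 = quadraticChar F (-1) * Fintype.card F := by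
  have hne : quadraticCharℂ F ≠ 1 :=
    (MulChar.ringHomComp_ne_one_iff (Int.cast_injective)).mpr (quadraticChar_ne_one hF)
  simpa using gaussSum_sq hne ((quadraticChar_isQuadratic F).comp _) hψ

theorem sum_addChar_binaryQuadratic (hF : ringChar F ≠ 2) {ψ : AddChar F ℂ}
    (hψ : ψ.IsPrimitive) {a b c : F} (hdisc : discrim a c b ≠ 0) :
    ∑ y, ∑ x, ψ (a * x ^ 2 + c * x * y + b * y ^ 2) =
      quadraticChar F (discrim a c b) * Fintype.card F := by
  rw [discrim] at hdisc ⊢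
  rcases eq_or_ne a 0 with rfl | ha
  · have hc : c ≠ 0 := by rintro rfl; simp at hdisc
    have hinner : ∀ y, ∑ x, ψ (0 * x ^ 2 + c * x * y + b * y ^ 2) =
        if y = 0 then (Fintype.card F : ℂ) else 0 := by
      intro y
      simp_rw [show ∀ x, 0 * x ^ 2 + c * x * y + b * y ^ 2 = x * (c * y) + b * y ^ 2 by
        intro x; ring, AddChar.map_add_eq_mul, ← sum_mul, AddChar.sum_mulShift _ hψ]
      rcases eq_or_ne y 0 with rfl | hy <;> simp [*]
    rw [Fintype.sum_congr _ _ hinner]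
    simp [quadraticChar_sq_one' hc]
  · have h2 : (2 : F) ≠ 0 := Ring.two_ne_zero hF
    have h4 : (4 : F) ≠ 0 := by
      rw [show (4 : F) = 2 ^ 2 by norm_num]; exact pow_ne_zero 2 h2
    set f := b - c ^ 2 / (4 * a) with hf_def
    have hdisc_eq : c ^ 2 - 4 * a * b = (-1) * a * f * 2 ^ 2 := by
      rw [hf_def]
      field_simp
      ring
    have hf : f ≠ 0 := by
      rintro h0
      simp [hdisc_eq, h0] at hdisc
    have hinner : ∀ y, ∑ x, ψ (a * x ^ 2 + c * x * y + b * y ^ 2) =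
        ψ (f * y ^ 2) * (quadraticChar F a * gaussSum (quadraticCharℂ F) ψ) := by
      intro y
      rw [← sum_addChar_mul_sq hF hψ ha, mul_sum]
      refine Fintype.sum_equiv (Equiv.addRight (c * y / (2 * a))) _ _ fun x => ?_
      rw [Equiv.coe_addRight, ← AddChar.map_add_eq_mul]
      congr 1
      rw [hf_def]
      field_simp
      ring
    simp_rw [hinner, ← sum_mul, sum_addChar_mul_sq hF hψ hf]
    rw [hdisc_eq, map_mul, map_mul, map_mul, quadraticChar_sq_one' h2]
    push_cast
    linear_combination (quadraticChar F a * quadraticChar F f : ℂ) *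
      gaussSum_quadraticCharℂ_sq hF hψ

end QuadraticGaussSum

section TraceCharacter

variable {p : ℕ} [Fact p.Prime] {ζ : ℂ} (hζ : IsPrimitiveRoot ζ p)

noncomputable def traceChar (L : Type*) [Field L] [Finite L] [CharP L p] : AddChar L ℂ :=
  letI := ZMod.algebra L p
  (AddChar.zmodChar p hζ.pow_eq_one).compAddMonoidHom (Algebra.trace (ZMod p) L).toAddMonoidHom

variable {L : Type*} [Field L] [Finite L] [CharP L p]

theorem traceChar_isPrimitive : (traceChar hζ L).IsPrimitive := by
  let := ZMod.algebra L p
  refine AddChar.IsPrimitive.of_ne_one (AddChar.ne_one_iff.mpr ?_)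
  obtain ⟨x, hx⟩ := Algebra.trace_surjective (ZMod p) L 1
  refine ⟨x, ?_⟩
  simp [traceChar, hx, AddChar.zmodChar_apply, ZMod.val_one, hζ.ne_one (Fact.out : p.Prime).one_lt]

theorem eq_traceChar [Fintype L] {k : ℕ} (hL : Fintype.card L = p ^ k) {χ : L → ℂ}
    (hχ : ∀ x : L, ∀ m : ℕ, (m : L) = ∑ i ∈ range k, x ^ p ^ i → χ x = ζ ^ m) :
    χ = traceChar hζ L := by
  let := ZMod.algebra L p
  have hk : Module.finrank (ZMod p) L = k := by
    have := (Module.card_eq_pow_finrank (K := ZMod p) (V := L)).symm.trans hL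
    rw [ZMod.card] at this
    exact Nat.pow_right_injective (Fact.out : p.Prime).two_le this
  funext x
  refine (hχ x (Algebra.trace (ZMod p) L x).val ?_).trans ?_
  · have := FiniteField.algebraMap_trace_eq_sum_pow (ZMod p) L x
    rw [hk, Nat.card_zmod] at this
    rw [← this, ZMod.natCast_val]
    rfl
  · simp [traceChar, AddChar.zmodChar_apply]

theorem traceChar_trace {K : Type*} [Field K] [Finite K] [CharP K p] (F : Subfield K) (x : K) :
    traceChar hζ F (Algebra.trace F K x) = traceChar hζ K x := by
  let := ZMod.algebra K p
  let := ZMod.algebra F p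
  have := IsScalarTower.of_algebraMap_eq' (R := ZMod p) (S := F) (A := K) (Subsingleton.elim _ _)
  simp only [traceChar, AddChar.compAddMonoidHom_apply, LinearMap.toAddMonoidHom_coe]
  rw [Algebra.trace_trace]

end TraceCharacter

theorem pow_pow_eq_self_of_card_eq_sq {K : Type*} [Field K] [Fintype K] {q : ℕ}
    (hK : Fintype.card K = q ^ 2) (x : K) : (x ^ q) ^ q = x := by
  rw [← pow_mul, ← sq, ← hK, FiniteField.pow_card]

theorem two_ne_zero_of_charP {K : Type*} [Field K] {p : ℕ} [CharP K p] (hp2 : p ≠ 2) :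
    (2 : K) ≠ 0 :=
  Ring.two_ne_zero (by rwa [ringChar.eq K p])

section FixedSubfield

variable {K : Type*} [Field K] {p : ℕ} [Fact p.Prime] [CharP K p] {n : ℕ}

variable (K p n) in
def fixedSubfield : Subfield K := (iterateFrobenius K p n).eqLocusField (RingHom.id K)

theorem mem_fixedSubfield {x : K} : x ∈ fixedSubfield K p n ↔ x ^ p ^ n = x := by
  rw [fixedSubfield, RingHom.mem_eqLocusField, iterateFrobenius_def, RingHom.id_apply]

theorem exists_pow_eq_self_sq_eq_iff_isSquare (u : fixedSubfield K p n) :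
    (∃ y : K, y ^ p ^ n = y ∧ y ^ 2 = u) ↔ IsSquare u := by
  constructor
  · rintro ⟨y, hy, hyu⟩
    exact ⟨⟨y, mem_fixedSubfield.mpr hy⟩, Subtype.ext (by rw [← hyu, sq]; rfl)⟩
  · rintro ⟨r, rfl⟩
    exact ⟨r, mem_fixedSubfield.mp r.2, by rw [sq]; rfl⟩

theorem not_isSquare_of_coe_eq_sq (hp2 : p ≠ 2) {δ : K} (hδ0 : δ ≠ 0)
    (hδ : δ ^ p ^ n = -δ) {d : fixedSubfield K p n} (hd : (d : K) = δ ^ 2) : ¬ IsSquare d := by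
  rw [← exists_pow_eq_self_sq_eq_iff_isSquare, hd]
  rintro ⟨y, hy, hyδ⟩
  have hδδ : δ = -δ := by
    rcases sq_eq_sq_iff_eq_or_eq_neg.mp hyδ with rfl | rfl
    · exact hy.symm.trans hδ
    · rw [← iterateFrobenius_def, map_neg, iterateFrobenius_def, hδ, neg_neg] at hy
      exact hy
  have h2δ : (2 : K) * δ = 0 := by linear_combination hδδ
  exact hδ0 ((mul_eq_zero.mp h2δ).resolve_left (two_ne_zero_of_charP hp2))

theorem apply_coe_eq_quadraticChar [Fintype (fixedSubfield K p n)]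
    [DecidableEq (fixedSubfield K p n)] {η : K → ℂ}
    (hη1 : ∀ x : K, x ≠ 0 → (∃ y : K, y ^ p ^ n = y ∧ y ^ 2 = x) → η x = 1)
    (hη2 : ∀ x : K, x ≠ 0 → ¬ (∃ y : K, y ^ p ^ n = y ∧ y ^ 2 = x) → η x = -1)
    {u : fixedSubfield K p n} (hu : u ≠ 0) : η u = quadraticChar _ u := by
  have hu' : (u : K) ≠ 0 := Subtype.coe_ne_coe.mpr hu
  by_cases hsq : IsSquare u
  · rw [hη1 _ hu' ((exists_pow_eq_self_sq_eq_iff_isSquare u).mpr hsq),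
      (quadraticChar_one_iff_isSquare hu).mpr hsq, Int.cast_one]
  · rw [hη2 _ hu' (mt (exists_pow_eq_self_sq_eq_iff_isSquare u).mp hsq),
      quadraticChar_neg_one_iff_not_isSquare.mpr hsq, Int.cast_neg, Int.cast_one]

variable [Fintype K]

theorem exists_ne_zero_pow_eq_neg (hK : Fintype.card K = (p ^ n) ^ 2) :
    ∃ δ : K, δ ≠ 0 ∧ δ ^ p ^ n = -δ := by
  have hn : n ≠ 0 := by
    rintro rfl
    simpa [hK] using Fintype.one_lt_card (α := K)
  have hp : 1 < p := (Fact.out : p.Prime).one_lt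
  obtain ⟨c, hc⟩ : ∃ c : K, c ^ p ^ n ≠ c := by
    by_contra! h
    refine FiniteField.X_pow_card_pow_sub_X_ne_zero K hn hp
      (Polynomial.eq_zero_of_natDegree_lt_card_of_eval_eq_zero _ Function.injective_id
        (fun x => by simp [h x]) ?_)
    rw [FiniteField.X_pow_card_pow_sub_X_natDegree_eq K hn hp, hK]
    exact lt_self_pow₀ (Nat.one_lt_pow hn hp) one_lt_two
  refine ⟨c ^ p ^ n - c, sub_ne_zero.mpr hc, ?_⟩
  rw [sub_pow_char_pow, pow_pow_eq_self_of_card_eq_sq hK]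
  ring

theorem iterateFrobenius_involutive (hK : Fintype.card K = (p ^ n) ^ 2) :
    Function.Involutive (iterateFrobenius K p n) := fun x => by
  simp only [iterateFrobenius_def, pow_pow_eq_self_of_card_eq_sq hK]

def fixedSubfieldProdEquiv (hK : Fintype.card K = (p ^ n) ^ 2) (hp2 : p ≠ 2) {δ : K}
    (hδ0 : δ ≠ 0) (hδ : δ ^ p ^ n = -δ) :
    fixedSubfield K p n × fixedSubfield K p n ≃ K where
  toFun z := z.1 + δ * z.2
  invFun w :=
    (⟨(w + w ^ p ^ n) / 2, by
      simp only [mem_fixedSubfield, ← iterateFrobenius_def (R := K) p n, map_div₀, map_add,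
        map_ofNat, iterateFrobenius_involutive hK w, add_comm]⟩,
     ⟨(w - w ^ p ^ n) / (2 * δ), by
      have h2 := two_ne_zero_of_charP (K := K) hp2
      simp only [← iterateFrobenius_def (R := K) p n] at hδ
      simp only [mem_fixedSubfield, ← iterateFrobenius_def (R := K) p n, map_div₀, map_sub,
        map_mul, map_ofNat, iterateFrobenius_involutive hK w, hδ]
      field_simp
      ring⟩)
  left_inv := by
    rintro ⟨⟨x, hx⟩, ⟨y, hy⟩⟩
    rw [mem_fixedSubfield] at hx hy
    have h2 := two_ne_zero_of_charP (K := K) hp2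
    ext <;> simp only [add_pow_char_pow, mul_pow, hx, hy, hδ] <;> field_simp <;> ring
  right_inv w := by
    have h2 := two_ne_zero_of_charP (K := K) hp2
    field_simp
    ring

theorem natCard_fixedSubfield (hK : Fintype.card K = (p ^ n) ^ 2) (hp2 : p ≠ 2) :
    Nat.card (fixedSubfield K p n) = p ^ n := by
  obtain ⟨δ, hδ0, hδ⟩ := exists_ne_zero_pow_eq_neg hK
  have := Nat.card_congr (fixedSubfieldProdEquiv hK hp2 hδ0 hδ)
  rw [Nat.card_prod, Nat.card_eq_fintype_card (α := K), hK, ← sq] at this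
  exact Nat.pow_left_injective two_ne_zero this

theorem finrank_fixedSubfield (hK : Fintype.card K = (p ^ n) ^ 2) (hp2 : p ≠ 2) :
    Module.finrank (fixedSubfield K p n) K = 2 := by
  have h := Module.natCard_eq_pow_finrank (K := fixedSubfield K p n) (V := K)
  rw [Nat.card_eq_fintype_card, hK, ← natCard_fixedSubfield hK hp2] at h
  exact (Nat.pow_right_injective Finite.one_lt_card h).symm

theorem algebraMap_trace_fixedSubfield (hK : Fintype.card K = (p ^ n) ^ 2) (hp2 : p ≠ 2)
    (x : K) :
    (Algebra.trace (fixedSubfield K p n) K x : K) = x + x ^ p ^ n := by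
  have := FiniteField.algebraMap_trace_eq_sum_pow (fixedSubfield K p n) K x
  rw [finrank_fixedSubfield hK hp2, natCard_fixedSubfield hK hp2] at this
  simp only [sum_range_succ, range_zero, sum_empty, pow_zero, pow_one, zero_add] at this
  exact this

theorem algebraMap_norm_fixedSubfield (hK : Fintype.card K = (p ^ n) ^ 2) (hp2 : p ≠ 2)
    (x : K) :
    (Algebra.norm (fixedSubfield K p n) x : K) = x ^ (p ^ n + 1) := by
  have := FiniteField.algebraMap_norm_eq_prod_pow (fixedSubfield K p n) K x
  rw [finrank_fixedSubfield hK hp2, natCard_fixedSubfield hK hp2] at this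
  simp only [prod_range_succ, range_zero, prod_empty, pow_zero, pow_one, one_mul] at this
  rw [pow_succ']
  exact this

theorem critical_point_eq_zero (hK : Fintype.card K = (p ^ n) ^ 2) {A B C θ : K}
    (hD : (A ^ p ^ n + A) ^ 2 - 4 * B ^ (p ^ n + 1) ≠ 0)
    (hθ : θ = (-(A ^ p ^ n + A) * C ^ p ^ n + 2 * B ^ p ^ n * C) /
      ((A ^ p ^ n + A) ^ 2 - 4 * B ^ (p ^ n + 1))) :
    (A ^ p ^ n + A) * θ ^ p ^ n + 2 * B * θ + C = 0 := by
  simp only [pow_succ B, ← iterateFrobenius_def (R := K) p n] at hD hθ ⊢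
  have hσθ := congrArg (iterateFrobenius K p n) hθ
  simp only [map_div₀, map_add, map_sub, map_mul, map_neg, map_pow, map_ofNat,
    iterateFrobenius_involutive hK _] at hσθ
  have hσD : (A + iterateFrobenius K p n A) ^ 2 - 4 * (B * iterateFrobenius K p n B) ≠ 0 := by
    convert hD using 1; ring
  rw [eq_div_iff hD] at hθ
  rw [eq_div_iff hσD] at hσθ
  refine (mul_eq_zero.mp ?_).resolve_right hD
  linear_combination (iterateFrobenius K p n A + A) * hσθ + 2 * B * hθ

-- The hypothesis on `θ` says that the part of `A (w + θ)^{q+1} + B (w + θ)² + C (w + θ)` that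
-- is linear in `w` has trace zero.
theorem sum_addChar_trace_shift (hK : Fintype.card K = (p ^ n) ^ 2) (hp2 : p ≠ 2)
    (ψ : AddChar (fixedSubfield K p n) ℂ) {A B C θ : K}
    (hθ : (A ^ p ^ n + A) * θ ^ p ^ n + 2 * B * θ + C = 0) :
    ∑ w, ψ (Algebra.trace _ K (A * w ^ (p ^ n + 1) + B * w ^ 2 + C * w)) =
      ψ (Algebra.trace _ K (-A * θ ^ (p ^ n + 1) - B * θ ^ 2)) *
        ∑ w, ψ (Algebra.trace _ K (A * w ^ (p ^ n + 1) + B * w ^ 2)) := by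
  rw [mul_sum]
  symm
  refine Fintype.sum_equiv (Equiv.addRight θ) _ _ fun w => ?_
  rw [← AddChar.map_add_eq_mul, ← map_add]
  congr 1
  apply Subtype.ext
  simp only [algebraMap_trace_fixedSubfield hK hp2, Equiv.coe_addRight, pow_succ,
    ← iterateFrobenius_def (R := K) p n] at hθ ⊢
  have hθσ := congrArg (iterateFrobenius K p n) hθ
  simp only [map_add, map_mul, map_neg, map_sub, map_pow, map_ofNat, map_zero,
    iterateFrobenius_involutive hK _] at hθσ ⊢
  linear_combination
    -(w + θ) * hθ - (iterateFrobenius K p n w + iterateFrobenius K p n θ) * hθσ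

theorem sum_addChar_trace_eq_sum_binaryQuadratic [Fintype (fixedSubfield K p n)]
    (hK : Fintype.card K = (p ^ n) ^ 2) (hp2 : p ≠ 2) (ψ : AddChar (fixedSubfield K p n) ℂ)
    {δ : K} (hδ0 : δ ≠ 0) (hδ : δ ^ p ^ n = -δ) (d : fixedSubfield K p n)
    (hd : (d : K) = δ ^ 2) (A B : K) :
    ∑ w, ψ (Algebra.trace _ K (A * w ^ (p ^ n + 1) + B * w ^ 2)) =
      ∑ y, ∑ x, ψ ((Algebra.trace _ K A + Algebra.trace _ K B) * x ^ 2 +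
        2 * Algebra.trace _ K (δ * B) * x * y +
        d * (Algebra.trace _ K B - Algebra.trace _ K A) * y ^ 2) := by
  rw [← (fixedSubfieldProdEquiv hK hp2 hδ0 hδ).sum_comp, Fintype.sum_prod_type, sum_comm]
  refine sum_congr rfl fun y _ => sum_congr rfl fun x _ => ?_
  congr 1
  apply Subtype.ext
  have hx := mem_fixedSubfield.mp x.2
  have hy := mem_fixedSubfield.mp y.2
  have h2 : ((2 : fixedSubfield K p n) : K) = 2 := by norm_cast
  push_cast [fixedSubfieldProdEquiv, Equiv.coe_fn_mk, hd, h2,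
    algebraMap_trace_fixedSubfield hK hp2]
  simp only [pow_succ, ← iterateFrobenius_def (R := K) p n] at hx hy hδ ⊢
  simp only [map_add, map_mul, map_neg, map_pow, hx, hy, hδ]
  ring

theorem discrim_trace_eq (hK : Fintype.card K = (p ^ n) ^ 2) (hp2 : p ≠ 2) {δ : K}
    (hδ : δ ^ p ^ n = -δ) {d : fixedSubfield K p n} (hd : (d : K) = δ ^ 2) (A B : K) :
    discrim (Algebra.trace _ K A + Algebra.trace _ K B) (2 * Algebra.trace _ K (δ * B))
        (d * (Algebra.trace _ K B - Algebra.trace _ K A)) =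
      2 ^ 2 * d * (Algebra.trace _ K A ^ 2 - 4 * Algebra.norm (fixedSubfield K p n) B) := by
  rw [discrim]
  apply Subtype.ext
  have h2 : ((2 : fixedSubfield K p n) : K) = 2 := by norm_cast
  have h4 : ((4 : fixedSubfield K p n) : K) = 4 := by norm_cast
  push_cast [h2, h4, hd, algebraMap_trace_fixedSubfield hK hp2,
    algebraMap_norm_fixedSubfield hK hp2]
  rw [mul_pow δ B, hδ]
  ring

theorem algebraMap_discrim_fixedSubfield (hK : Fintype.card K = (p ^ n) ^ 2) (hp2 : p ≠ 2)
    (A B : K) :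
    ((Algebra.trace (fixedSubfield K p n) K A ^ 2 - 4 * Algebra.norm _ B : fixedSubfield K p n) :
        K) = (A ^ p ^ n + A) ^ 2 - 4 * B ^ (p ^ n + 1) := by
  have h4 : ((4 : fixedSubfield K p n) : K) = 4 := by norm_cast
  push_cast [h4, algebraMap_trace_fixedSubfield hK hp2, algebraMap_norm_fixedSubfield hK hp2]
  ring

theorem sum_addChar_trace_eq_neg_quadraticChar [Fintype (fixedSubfield K p n)]
    [DecidableEq (fixedSubfield K p n)] (hK : Fintype.card K = (p ^ n) ^ 2) (hp2 : p ≠ 2)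
    {ψ : AddChar (fixedSubfield K p n) ℂ} (hψ : ψ.IsPrimitive) {A B : K}
    (hD : Algebra.trace _ K A ^ 2 - 4 * Algebra.norm (fixedSubfield K p n) B ≠ 0) :
    ∑ w, ψ (Algebra.trace _ K (A * w ^ (p ^ n + 1) + B * w ^ 2)) =
      -quadraticChar _ (Algebra.trace _ K A ^ 2 - 4 * Algebra.norm (fixedSubfield K p n) B) *
        Nat.card (fixedSubfield K p n) := by
  have hF : ringChar (fixedSubfield K p n) ≠ 2 := by rwa [ringChar.eq _ p]
  obtain ⟨δ, hδ0, hδ⟩ := exists_ne_zero_pow_eq_neg hK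
  let d : fixedSubfield K p n :=
    ⟨δ ^ 2, by rw [mem_fixedSubfield, ← pow_mul, mul_comm, pow_mul, hδ, neg_sq]⟩
  have hd0 : d ≠ 0 := Subtype.coe_ne_coe.mp (pow_ne_zero 2 hδ0)
  have hdisc := discrim_trace_eq hK hp2 hδ (d := d) rfl A B
  rw [sum_addChar_trace_eq_sum_binaryQuadratic hK hp2 ψ hδ0 hδ d rfl,
    sum_addChar_binaryQuadratic hF hψ
      (hdisc ▸ mul_ne_zero (mul_ne_zero (pow_ne_zero 2 (Ring.two_ne_zero hF)) hd0) hD),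
    hdisc, map_mul, map_mul, quadraticChar_sq_one' (Ring.two_ne_zero hF),
    quadraticChar_neg_one_iff_not_isSquare.mpr (not_isSquare_of_coe_eq_sq hp2 hδ0 hδ rfl),
    Nat.card_eq_fintype_card]
  push_cast
  ring

end FixedSubfield

theorem stmt1_general (p n q : ℕ) (hp : p.Prime) (hp2 : p ≠ 2)
    (hq : q = p ^ n)
    (K : Type) [Field K] [Fintype K] (hK : Fintype.card K = q ^ 2)
    (ζ : ℂ) (hζ : IsPrimitiveRoot ζ p)
    (χ : K → ℂ)
    (hχ : ∀ x : K, ∀ m : ℕ, (m : K) = ∑ i ∈ Finset.range (2 * n), x ^ p ^ i →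
      χ x = ζ ^ m)
    (η : K → ℂ)
    (hη1 : ∀ x : K, x ≠ 0 → (∃ y : K, y ^ q = y ∧ y ^ 2 = x) → η x = 1)
    (hη2 : ∀ x : K, x ≠ 0 → ¬ (∃ y : K, y ^ q = y ∧ y ^ 2 = x) → η x = -1)
    (A B C : K)
    (hD : (A ^ q + A) ^ 2 - 4 * B ^ (q + 1) ≠ 0)
    (θ : K)
    (hθ : θ = (-(A ^ q + A) * C ^ q + 2 * B ^ q * C) /
      ((A ^ q + A) ^ 2 - 4 * B ^ (q + 1))) :
    ∑ w : K, χ (A * w ^ (q + 1) + B * w ^ 2 + C * w) =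
      -η ((A ^ q + A) ^ 2 - 4 * B ^ (q + 1)) * q *
        χ (-A * θ ^ (q + 1) - B * θ ^ 2) := by
  classical
  subst hq
  have : Fact p.Prime := ⟨hp⟩
  have : CharP K p := charP_of_card_eq_prime_pow (hK.trans (pow_mul p n 2).symm)
  let F := fixedSubfield K p n
  have hχT : χ = fun z => traceChar hζ F (Algebra.trace F K z) := by
    rw [eq_traceChar hζ (by rw [hK, ← pow_mul, mul_comm]) hχ]
    exact funext fun z => (traceChar_trace hζ F z).symm
  have hDK := algebraMap_discrim_fixedSubfield hK hp2 A B
  have hD0 : Algebra.trace F K A ^ 2 - 4 * Algebra.norm F B ≠ 0 :=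
    fun h => hD (by rw [← hDK, h, ZeroMemClass.coe_zero])
  rw [hχT, sum_addChar_trace_shift hK hp2 _ (critical_point_eq_zero hK hD hθ),
    sum_addChar_trace_eq_neg_quadraticChar hK hp2 (traceChar_isPrimitive hζ) hD0, ← hDK,
    apply_coe_eq_quadraticChar hη1 hη2 hD0, natCard_fixedSubfield hK hp2]
  ring

/-- Let `A, B, C ∈ F_{q²}` with `B ≠ 0` and `Tr(A)² ≠ 4N(B)`, so
`D = Tr(A)² − 4N(B) ≠ 0`. Then, with `θ = (−Tr(A)·C^q + 2B^q·C)/D`, one has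
`∑_{w ∈ F_{q²}} χ(A·w^{q+1} + B·w² + C·w) = −η(D)·q·χ(−A·θ^{q+1} − B·θ²)`.
Here `K` plays the role of `F_{q²}`, `F_q = {x : K | x^q = x}`, `Tr(x) = x^q + x`,
`N(x) = x^{q+1}`, `χ` is the canonical additive character of `F_{q²}` (via the absolute trace
`∑_{i < 2n} x^(p^i)`), and `η` is the quadratic character of `F_q` extended by `η(0) = 0`. -/
theorem stmt1 (p n q : ℕ) (hp : p.Prime) (hp2 : p ≠ 2) (hn : 0 < n)
    (hq : q = p ^ n)
    (K : Type) [Field K] [Fintype K] (hK : Fintype.card K = q ^ 2)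
    (ζ : ℂ) (hζ : IsPrimitiveRoot ζ p)
    (χ : K → ℂ)
    (hχ : ∀ x : K, ∀ m : ℕ, (m : K) = ∑ i ∈ Finset.range (2 * n), x ^ p ^ i →
      χ x = ζ ^ m)
    (η : K → ℂ) (hη0 : η 0 = 0)
    (hη1 : ∀ x : K, x ≠ 0 → (∃ y : K, y ^ q = y ∧ y ^ 2 = x) → η x = 1)
    (hη2 : ∀ x : K, x ≠ 0 → ¬ (∃ y : K, y ^ q = y ∧ y ^ 2 = x) → η x = -1)
    (A B C : K) (hB : B ≠ 0)
    (hD : (A ^ q + A) ^ 2 - 4 * B ^ (q + 1) ≠ 0)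
    (θ : K)
    (hθ : θ = (-(A ^ q + A) * C ^ q + 2 * B ^ q * C) /
      ((A ^ q + A) ^ 2 - 4 * B ^ (q + 1))) :
    ∑ w : K, χ (A * w ^ (q + 1) + B * w ^ 2 + C * w) =
      -η ((A ^ q + A) ^ 2 - 4 * B ^ (q + 1)) * q *
        χ (-A * θ ^ (q + 1) - B * θ ^ 2) :=
  stmt1_general p n q hp hp2 hq K hK ζ hζ χ hχ η hη1 hη2 A B C hD θ hθ
end

section
/- Let a, b, c ∈ F_{q²} with a^q + b ∉ F_q, and set γ = a² − ab + c and ε = a^q − a − b^q + b. Then the number of zeros of x^{q+1} + x² + a·x^q + b·x + c in F_{q²} is equal to the number of zeros in F_q of the cubic x³ − Tr(3a − b)·x² + (4Tr(γ) − ε²)·x + 4Tr(γε) + Tr(3a − b)·ε². -/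
open Finset
open scoped Classical

/-! The `q`-power map `σ` is an involution of `F_{q²}` with fixed field `F_q`. Substituting
`y = x + a` turns the equation into `y (Tr y + B) = -γ` with `B = b - a^q - 2a ∉ F_q`, so a root
`y` is determined by `t = Tr y ∈ F_q`, namely `y = -γ / (t + B)`, and a `t ∈ F_q` comes from a root
exactly when `Tr (-γ / (t + B)) = t`, a cubic condition on `t`. The substitution
`r = Tr (3a - b) - 2t` turns that cubic into `-1/8` times the cubic of the statement. -/

section Involution

variable {K : Type*} [Field K] {σ : K →+* K}

theorem add_ne_zero_of_fixed_of_not_fixed {t B : K} (ht : σ t = t) (hB : σ B ≠ B) :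
    t + B ≠ 0 := by
  intro h
  apply hB
  rw [eq_neg_of_add_eq_zero_right h, map_neg, ht]

theorem trace_div_eq_of_cubic_eq_zero (hσ : Function.Involutive σ) {t B : K} (γ : K)
    (ht : σ t = t) (hB : σ B ≠ B)
    (hcubic : σ γ * (t + B) + γ * (t + σ B) + t * (t + B) * (t + σ B) = 0) :
    σ (-γ / (t + B)) + -γ / (t + B) = t := by
  have h₁ := add_ne_zero_of_fixed_of_not_fixed ht hB
  have h₂ : t + σ B ≠ 0 :=
    add_ne_zero_of_fixed_of_not_fixed ht (fun h => hB (by rw [← h, hσ]))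
  rw [map_div₀, map_neg, map_add, ht]
  field_simp
  linear_combination -hcubic

theorem card_zeros_translate [Fintype K] (a b c : K) :
    #{x | σ x * x + x ^ 2 + a * σ x + b * x + c = 0} =
      #{y | y * (σ y + y + (b - σ a - 2 * a)) + (a ^ 2 - a * b + c) = 0} := by
  refine card_nbij' (· + a) (· - a) ?_ ?_ (fun x _ => add_sub_cancel_right x a)
    (fun y _ => sub_add_cancel y a)
  · intro x hx
    simp only [coe_filter, mem_univ, true_and, Set.mem_ofPred_eq, map_add] at hx ⊢
    linear_combination hx
  · intro y hy
    simp only [coe_filter, mem_univ, true_and, Set.mem_ofPred_eq, map_sub] at hy ⊢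
    linear_combination hy

theorem card_zeros_eq_card_fixed_zeros_of_trace [Fintype K] (hσ : Function.Involutive σ) {B : K}
    (hB : σ B ≠ B) (γ : K) :
    #{y | y * (σ y + y + B) + γ = 0} =
      #{t | σ t = t ∧ σ γ * (t + B) + γ * (t + σ B) + t * (t + B) * (t + σ B) = 0} := by
  refine card_bij' (fun y _ => σ y + y) (fun t _ => -γ / (t + B)) ?_ ?_ ?_ ?_
  · intro y hy
    simp only [mem_filter, mem_univ, true_and] at hy ⊢
    have hσy : σ y * (y + σ y + σ B) + σ γ = 0 := by
      simpa [hσ y] using congrArg σ hy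
    refine ⟨by rw [map_add, hσ y, add_comm], ?_⟩
    linear_combination (σ y + y + σ B) * hy + (σ y + y + B) * hσy
  · intro t ht
    simp only [mem_filter, mem_univ, true_and] at ht ⊢
    rw [trace_div_eq_of_cubic_eq_zero hσ γ ht.1 hB ht.2]
    field_simp [add_ne_zero_of_fixed_of_not_fixed ht.1 hB]
    ring
  · intro y hy
    simp only [mem_filter, mem_univ, true_and] at hy
    have hfix : σ (σ y + y) = σ y + y := by rw [map_add, hσ y, add_comm]
    rw [div_eq_iff (add_ne_zero_of_fixed_of_not_fixed hfix hB)]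
    linear_combination -hy
  · intro t ht
    simp only [mem_filter, mem_univ, true_and] at ht
    exact trace_div_eq_of_cubic_eq_zero hσ γ ht.1 hB ht.2

theorem card_fixed_zeros_comp_affine [Fintype K] (h2 : (2 : K) ≠ 0) {M : K} (hM : σ M = M)
    {P Q : K → K} (hPQ : ∀ t, P (M - 2 * t) = 0 ↔ Q t = 0) :
    #{t | σ t = t ∧ Q t = 0} = #{r | σ r = r ∧ P r = 0} := by
  refine card_nbij' (fun t => M - 2 * t) (fun r => (M - r) / 2) ?_ ?_ ?_ ?_
  · intro t ht
    simp only [coe_filter, mem_univ, true_and, Set.mem_ofPred_eq] at ht ⊢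
    exact ⟨by rw [map_sub, map_mul, map_ofNat, hM, ht.1], (hPQ t).2 ht.2⟩
  · intro r hr
    simp only [coe_filter, mem_univ, true_and, Set.mem_ofPred_eq] at hr ⊢
    refine ⟨by rw [map_div₀, map_sub, map_ofNat, hM, hr.1], (hPQ _).1 ?_⟩
    rw [mul_div_cancel₀ _ h2, sub_sub_cancel]
    exact hr.2
  · intro t _
    simp only
    rw [sub_sub_cancel, mul_div_cancel_left₀ _ h2]
  · intro r _
    simp only
    rw [mul_div_cancel₀ _ h2, sub_sub_cancel]

end Involution

theorem exists_involutive_ringHom_eq_pow {K : Type*} [Field K] [Fintype K] {p n : ℕ}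
    [Fact p.Prime] [CharP K p] (hK : Fintype.card K = (p ^ n) ^ 2) :
    ∃ σ : K →+* K, Function.Involutive σ ∧ ∀ x, σ x = x ^ p ^ n :=
  ⟨iterateFrobenius K p n,
    fun x => by simp only [iterateFrobenius_def, ← pow_mul, ← sq, ← hK, FiniteField.pow_card],
    iterateFrobenius_def p n⟩

theorem cubic_shift_identity {R : Type*} [CommRing R] (B B' g G t : R) :
    (-(B + B') - 2 * t) ^ 3 - -(B + B') * (-(B + B') - 2 * t) ^ 2 +
        (4 * (G + g) - (B - B') ^ 2) * (-(B + B') - 2 * t) +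
        4 * ((g - G) * (B - B')) + -(B + B') * (B - B') ^ 2 =
      -8 * (G * (t + B) + g * (t + B') + t * (t + B) * (t + B')) := by
  ring

theorem card_zeros_eq_card_fixed_cubic_zeros {K : Type*} [Field K] [Fintype K] {σ : K →+* K}
    (hσ : Function.Involutive σ) (h2 : (2 : K) ≠ 0) (a b c : K) (hab : σ (σ a + b) ≠ σ a + b)
    (γ ε : K) (hγ : γ = a ^ 2 - a * b + c) (hε : ε = σ a - a - σ b + b) :
    #{x | σ x * x + x ^ 2 + a * σ x + b * x + c = 0} =
      #{x | σ x = x ∧ x ^ 3 - (σ (3 * a - b) + (3 * a - b)) * x ^ 2 +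
        (4 * (σ γ + γ) - ε ^ 2) * x + 4 * (σ (γ * ε) + γ * ε) +
        (σ (3 * a - b) + (3 * a - b)) * ε ^ 2 = 0} := by
  set B := b - σ a - 2 * a
  have hB : σ B ≠ B := by
    intro h
    apply hab
    simp only [B, map_sub, map_mul, map_ofNat, hσ a] at h
    rw [map_add, hσ a]
    linear_combination h
  have hM : σ (3 * a - b) + (3 * a - b) = -(B + σ B) := by
    simp only [B, map_sub, map_mul, map_ofNat, hσ a]; ring
  have hεB : ε = B - σ B := by
    simp only [hε, B, map_sub, map_mul, map_ofNat, hσ a]; ring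
  have hγε : σ (γ * ε) + γ * ε = (γ - σ γ) * (B - σ B) := by
    simp only [hεB, map_mul, map_sub, hσ B]; ring
  have h8 : (-8 : K) ≠ 0 := by
    simpa [show (-8 : K) = -2 ^ 3 by norm_num] using h2
  rw [card_zeros_translate, ← hγ, card_zeros_eq_card_fixed_zeros_of_trace hσ hB, hM, hγε, hεB]
  refine card_fixed_zeros_comp_affine h2 (M := -(B + σ B))
    (by rw [map_neg, map_add, hσ B, add_comm]) fun t => ?_
  rw [cubic_shift_identity, mul_eq_zero, or_iff_right h8]

theorem stmt4_general (p n q : ℕ) (hp : p.Prime) (hp2 : p ≠ 2)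
    (hq : q = p ^ n)
    (K : Type) [Field K] [Fintype K] (hK : Fintype.card K = q ^ 2)
    (a b c : K) (hab : (a ^ q + b) ^ q ≠ a ^ q + b)
    (γ ε : K) (hγ : γ = a ^ 2 - a * b + c) (hε : ε = a ^ q - a - b ^ q + b) :
    (Finset.univ.filter
        (fun x : K => x ^ (q + 1) + x ^ 2 + a * x ^ q + b * x + c = 0)).card =
      (Finset.univ.filter
        (fun x : K => x ^ q = x ∧
          x ^ 3 - ((3 * a - b) ^ q + (3 * a - b)) * x ^ 2 +
            (4 * (γ ^ q + γ) - ε ^ 2) * x +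
            4 * ((γ * ε) ^ q + γ * ε) + ((3 * a - b) ^ q + (3 * a - b)) * ε ^ 2 = 0)).card := by
  subst hq
  have := Fact.mk hp
  have := charP_of_card_eq_prime_pow (R := K) (f := n * 2) (by rw [hK, pow_mul])
  have h2 : (2 : K) ≠ 0 := Ring.two_ne_zero (by rw [ringChar.eq K p]; exact hp2)
  obtain ⟨σ, hσ, hσ_eq⟩ := exists_involutive_ringHom_eq_pow hK
  simp only [pow_succ _ (p ^ n), ← hσ_eq] at hab hε ⊢
  exact card_zeros_eq_card_fixed_cubic_zeros hσ h2 a b c hab γ ε hγ hε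

/-- Let `a, b, c ∈ F_{q²}` with `a^q + b ∉ F_q`, `γ = a² − ab + c` and
`ε = a^q − a − b^q + b`. Then the number of zeros of `x^{q+1} + x² + a·x^q + b·x + c` in
`F_{q²}` equals the number of zeros in `F_q` of
`x³ − Tr(3a−b)·x² + (4Tr(γ) − ε²)·x + 4Tr(γε) + Tr(3a−b)·ε²`.
Here `q` is a power of an odd prime, `K` plays the role of `F_{q²}`,
`F_q = {x : K | x^q = x}` and `Tr(x) = x^q + x`. -/
theorem stmt4 (p n q : ℕ) (hp : p.Prime) (hp2 : p ≠ 2) (hn : 0 < n)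
    (hq : q = p ^ n)
    (K : Type) [Field K] [Fintype K] (hK : Fintype.card K = q ^ 2)
    (a b c : K) (hab : (a ^ q + b) ^ q ≠ a ^ q + b)
    (γ ε : K) (hγ : γ = a ^ 2 - a * b + c) (hε : ε = a ^ q - a - b ^ q + b) :
    (Finset.univ.filter
        (fun x : K => x ^ (q + 1) + x ^ 2 + a * x ^ q + b * x + c = 0)).card =
      (Finset.univ.filter
        (fun x : K => x ^ q = x ∧
          x ^ 3 - ((3 * a - b) ^ q + (3 * a - b)) * x ^ 2 +
            (4 * (γ ^ q + γ) - ε ^ 2) * x +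
            4 * ((γ * ε) ^ q + γ * ε) + ((3 * a - b) ^ q + (3 * a - b)) * ε ^ 2 = 0)).card :=
  stmt4_general p n q hp hp2 hq K hK a b c hab γ ε hγ hε
end

section
/- Let a, b, c ∈ F_{q²} with a^q + b ∈ F_q. Then the number of zeros of x^{q+1} + x² + a·x^q + b·x + c in F_{q²} equals η((a^q + b)² − 4Tr(c)) + M₀, where M₀ = 1 if Tr(a² − ab + c) ≠ 0, M₀ = q if a² − ab + c = 0, and M₀ = 0 otherwise (i.e., if Tr(a² − ab + c) = 0 but a² − ab + c ≠ 0). -/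
open Finset
open scoped Classical

/-!
Write `σ x = x ^ q` and `T x = σ x + x`. Since
`f x = (x + a) * T x + u * x + c` with `u = b - a` fixed by `σ`, the polynomial `f` is affine
on each fibre `T x = t` (`t ∈ F_q`). For `t ≠ -u` its only possible zero is
`-(a t + c) / (t + u)`, which lies in the fibre iff `t² + (a^q + b) t + Tr c = 0`; on the fibre
`t = -u` it is the constant `γ = c - a u`. Every fibre has `q` points because `X^q + X - t`
divides `X^{q²} - X`. Completing the square counts the roots in `F_q` of the quadratic as
`1 + η(disc)`, and its value at `-u` is `Tr γ`, which accounts for `M₀`.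
-/

open Polynomial in
theorem card_roots_of_dvd_X_pow_card_sub_X {K : Type*} [Field K] [Fintype K] {P : K[X]}
    (hP : P ∣ X ^ Fintype.card K - X) : #{x | P.eval x = 0} = P.natDegree := by
  obtain ⟨G, hG⟩ := hP
  have hF : P * G ≠ 0 := hG ▸ FiniteField.X_pow_card_sub_X_ne_zero K Fintype.one_lt_card
  have hroots : P.roots + G.roots = univ.val := by
    rw [← roots_mul hF, ← hG, FiniteField.roots_X_pow_card_sub_X]
  have hdeg : P.natDegree + G.natDegree = Fintype.card K := by
    rw [← natDegree_mul (left_ne_zero_of_mul hF) (right_ne_zero_of_mul hF), ← hG,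
      FiniteField.X_pow_card_sub_X_natDegree_eq K Fintype.one_lt_card]
  have hcard : Multiset.card P.roots + Multiset.card G.roots = Fintype.card K := by
    rw [← Multiset.card_add, hroots, ← card_univ]; rfl
  have hnodup : P.roots.Nodup :=
    Multiset.nodup_of_le (hroots ▸ Multiset.le_add_right _ _) univ.nodup
  have hfilter : ({x | P.eval x = 0} : Finset K) = P.roots.toFinset := by
    ext x; simp [mem_roots (left_ne_zero_of_mul hF)]
  rw [hfilter, Multiset.toFinset_card_of_nodup hnodup]
  linarith [card_roots' P, card_roots' G]

open Polynomial in
theorem card_filter_pow_add_self_eq {K : Type*} [Field K] [Fintype K] {p n : ℕ} [Fact p.Prime]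
    [CharP K p] (hK : Fintype.card K = (p ^ n) ^ 2) {t : K} (ht : t ^ p ^ n = t) :
    #{x | x ^ p ^ n + x = t} = p ^ n := by
  have hq : 1 < p ^ n := by
    by_contra! h
    have := Fintype.one_lt_card (α := K)
    rw [hK] at this
    exact this.not_ge (pow_le_one₀ (Nat.zero_le _) h)
  set P : K[X] := X ^ p ^ n + X - C t
  have hdvd : P ∣ X ^ Fintype.card K - X := by
    have : (X ^ Fintype.card K - X : K[X]) = P ^ p ^ n - P := by
      rw [sub_pow_expChar_pow, add_pow_expChar_pow, ← C_pow, ht, hK]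
      ring
    rw [this]
    exact dvd_sub (dvd_pow_self P (by omega)) dvd_rfl
  have hdeg : P.natDegree = p ^ n := by
    rw [natDegree_sub_C, natDegree_add_eq_left_of_natDegree_lt] <;> simp [hq]
  simpa [P, hdeg, sub_eq_zero] using card_roots_of_dvd_X_pow_card_sub_X hdvd

section Involution

variable {K : Type*} [Field K] (σ : K →+* K)

theorem map_sub_eq_of_map_add_eq {a b : K} (hσ : ∀ x, σ (σ x) = x)
    (hab : σ (σ a + b) = σ a + b) : σ (b - a) = b - a := by
  rw [map_add, hσ] at hab
  rw [map_sub]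
  linear_combination hab

variable [Fintype K]

theorem card_filter_fixed_sq_eq_one_add (h2 : (2 : K) ≠ 0) (η : K → ℤ) (hη0 : η 0 = 0)
    (hη1 : ∀ x, x ≠ 0 → (∃ y, σ y = y ∧ y ^ 2 = x) → η x = 1)
    (hη2 : ∀ x, x ≠ 0 → ¬ (∃ y, σ y = y ∧ y ^ 2 = x) → η x = -1) (D : K) :
    (#{y | σ y = y ∧ y ^ 2 = D} : ℤ) = 1 + η D := by
  by_cases hD : D = 0
  · subst hD
    have : ({y | σ y = y ∧ y ^ 2 = 0} : Finset K) = {0} := by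
      ext y; simp +contextual
    rw [this, hη0, card_singleton]; rfl
  by_cases hsq : ∃ y, σ y = y ∧ y ^ 2 = D
  · obtain ⟨y, hy, rfl⟩ := hsq
    have hy0 : y ≠ 0 := by rintro rfl; simp at hD
    have : ({z | σ z = z ∧ z ^ 2 = y ^ 2} : Finset K) = {y, -y} := by
      ext z
      simp only [mem_filter, mem_univ, true_and, mem_insert, mem_singleton,
        sq_eq_sq_iff_eq_or_eq_neg]
      constructor
      · exact fun h => h.2
      · rintro (rfl | rfl) <;> simp [hy]
    have hne : y ≠ -y := fun h =>
      hy0 <| (mul_eq_zero.mp (by linear_combination h)).resolve_left h2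
    rw [this, card_pair hne, hη1 _ hD ⟨y, hy, rfl⟩]; rfl
  · rw [hη2 D hD hsq, filter_eq_empty_iff.mpr fun y _ h => hsq ⟨y, h⟩, card_empty]; rfl

theorem card_filter_fixed_quadratic_eq_card_sq (h2 : (2 : K) ≠ 0) {B : K} (hB : σ B = B)
    (C : K) :
    #{t | σ t = t ∧ t ^ 2 + B * t + C = 0} = #{y | σ y = y ∧ y ^ 2 = B ^ 2 - 4 * C} := by
  apply card_nbij' (fun t => 2 * t + B) (fun y => (y - B) / 2)
  · intro t ht
    simp only [coe_filter, Set.mem_ofPred_eq, mem_univ, true_and] at ht ⊢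
    refine ⟨by simp [ht.1, hB, map_ofNat], by linear_combination 4 * ht.2⟩
  · intro y hy
    simp only [coe_filter, Set.mem_ofPred_eq, mem_univ, true_and] at hy ⊢
    refine ⟨by simp [hy.1, hB, map_ofNat], ?_⟩
    field_simp
    linear_combination hy.2
  · intro t _; field_simp; ring
  · intro y _; field_simp; ring

theorem card_filter_zero_trace_eq_of_ne {a b c t : K} (hu : σ (b - a) = b - a) (ht : σ t = t)
    (htu : t + (b - a) ≠ 0) :
    #{x | σ x * x + x ^ 2 + a * σ x + b * x + c = 0 ∧ σ x + x = t} =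
      if t ^ 2 + (σ a + b) * t + (σ c + c) = 0 then 1 else 0 := by
  set s : Finset K := {x | σ x * x + x ^ 2 + a * σ x + b * x + c = 0 ∧ σ x + x = t}
  set x₀ := -(a * t + c) / (t + (b - a))
  have hsub : s ⊆ {x₀} := by
    intro x hx
    simp only [s, mem_filter, mem_univ, true_and] at hx
    rw [mem_singleton, eq_div_iff htu]
    linear_combination hx.1 - (x + a) * hx.2
  have hσx₀ : σ x₀ = -(σ a * t + σ c) / (t + (b - a)) := by
    simp [x₀, ht, hu]
  have htrace : σ x₀ + x₀ = t ↔ t ^ 2 + (σ a + b) * t + (σ c + c) = 0 := by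
    rw [hσx₀, ← add_div, div_eq_iff htu]
    constructor <;> intro h <;> linear_combination -h
  have hmem : x₀ ∈ s ↔ t ^ 2 + (σ a + b) * t + (σ c + c) = 0 := by
    simp only [s, mem_filter, mem_univ, true_and, ← htrace]
    refine ⟨fun h => h.2, fun h => ⟨?_, h⟩⟩
    have : x₀ * (t + (b - a)) = -(a * t + c) := div_mul_cancel₀ _ htu
    linear_combination (x₀ + a) * h + this
  split_ifs with hQ
  · rw [(subset_singleton_iff.mp hsub).resolve_left (ne_empty_of_mem (hmem.mpr hQ)),
      card_singleton]
  · rw [card_eq_zero, ← subset_empty]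
    intro x hx
    obtain rfl := mem_singleton.mp (hsub hx)
    exact absurd (hmem.mp hx) hQ

theorem card_filter_zero_trace_eq_neg {a b c : K} :
    #{x | σ x * x + x ^ 2 + a * σ x + b * x + c = 0 ∧ σ x + x = -(b - a)} =
      if a ^ 2 - a * b + c = 0 then #{x | σ x + x = -(b - a)} else 0 := by
  split_ifs with hγ
  · congr 1; ext x
    simp only [mem_filter, mem_univ, true_and, and_iff_right_iff_imp]
    intro hx
    linear_combination (x + a) * hx + hγ
  · rw [card_eq_zero, filter_eq_empty_iff]
    rintro x - ⟨h, hx⟩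
    exact hγ (by linear_combination h - (x + a) * hx)

-- The root `t = -(b - a)` is corrected for on the left, avoiding truncated subtraction in `ℕ`.
theorem card_filter_zero_add_ite_eq {a b c : K} (hσ : ∀ x, σ (σ x) = x)
    (hab : σ (σ a + b) = σ a + b) {m : ℕ}
    (hfib : ∀ t, σ t = t → #{x | σ x + x = t} = m) :
    #{x | σ x * x + x ^ 2 + a * σ x + b * x + c = 0} +
        (if σ (a ^ 2 - a * b + c) + (a ^ 2 - a * b + c) = 0 then 1 else 0) =
      #{t | σ t = t ∧ t ^ 2 + (σ a + b) * t + (σ c + c) = 0} +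
        (if a ^ 2 - a * b + c = 0 then m else 0) := by
  have hu := map_sub_eq_of_map_add_eq σ hσ hab
  set Q : K → K := fun t => t ^ 2 + (σ a + b) * t + (σ c + c)
  set fixed : Finset K := {t | σ t = t}
  have hmaps : ∀ x, σ x + x ∈ fixed := by simp [fixed, hσ, add_comm]
  have hu_fix : σ (-(b - a)) = -(b - a) := by rw [map_neg, hu]
  have hu_mem : -(b - a) ∈ fixed := mem_filter.mpr ⟨mem_univ _, hu_fix⟩
  have hQ_neg : Q (-(b - a)) = σ (a ^ 2 - a * b + c) + (a ^ 2 - a * b + c) := by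
    have : σ b = σ a + b - a := by rw [map_sub] at hu; linear_combination hu
    simp only [Q, map_add, map_sub, map_mul, map_pow, this]
    ring
  have hfib_neg := card_filter_zero_trace_eq_neg σ (a := a) (b := b) (c := c)
  rw [hfib _ hu_fix] at hfib_neg
  have hfib_ne : ∀ t ∈ fixed.erase (-(b - a)),
      #{x | σ x * x + x ^ 2 + a * σ x + b * x + c = 0 ∧ σ x + x = t} =
        if Q t = 0 then 1 else 0 := by
    intro t ht
    obtain ⟨htu, ht⟩ := mem_erase.mp ht
    exact card_filter_zero_trace_eq_of_ne σ hu (by simpa [fixed] using ht)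
      (fun h => htu (by linear_combination h))
  have hroots : #{t | σ t = t ∧ Q t = 0} = ∑ t ∈ fixed, if Q t = 0 then 1 else 0 := by
    rw [← card_filter, filter_filter]
  rw [card_eq_sum_card_fiberwise (t := fixed) fun x _ => hmaps x]
  simp only [filter_filter]
  rw [← add_sum_erase fixed _ hu_mem, sum_congr rfl hfib_ne, hroots,
    ← add_sum_erase fixed (fun t => if Q t = 0 then 1 else 0) hu_mem, hfib_neg, hQ_neg]
  ring

end Involution

theorem stmt5_general (p n q : ℕ) (hp : p.Prime) (hp2 : p ≠ 2)
    (hq : q = p ^ n)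
    (K : Type) [Field K] [Fintype K] (hK : Fintype.card K = q ^ 2)
    (η : K → ℤ) (hη0 : η 0 = 0)
    (hη1 : ∀ x : K, x ≠ 0 → (∃ y : K, y ^ q = y ∧ y ^ 2 = x) → η x = 1)
    (hη2 : ∀ x : K, x ≠ 0 → ¬ (∃ y : K, y ^ q = y ∧ y ^ 2 = x) → η x = -1)
    (a b c : K) (hab : (a ^ q + b) ^ q = a ^ q + b)
    (γ : K) (hγ : γ = a ^ 2 - a * b + c)
    (M₀ : ℤ)
    (hM₀ : M₀ = if γ ^ q + γ ≠ 0 then 1 else if γ = 0 then (q : ℤ) else 0) :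
    ((Finset.univ.filter
        (fun x : K => x ^ (q + 1) + x ^ 2 + a * x ^ q + b * x + c = 0)).card : ℤ) =
      η ((a ^ q + b) ^ 2 - 4 * (c ^ q + c)) + M₀ := by
  subst hq hγ hM₀
  have := Fact.mk hp
  have : CharP K p := charP_of_card_eq_prime_pow (hK.trans (pow_mul p n 2).symm)
  set σ := iterateFrobenius K p n
  have hσ : ∀ x, σ (σ x) = x := fun x => by
    simp only [σ, iterateFrobenius_def, ← pow_mul, ← sq, ← hK, FiniteField.pow_card]
  have h2 : (2 : K) ≠ 0 := Ring.two_ne_zero (by rwa [ringChar.eq K p])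
  have hcount := card_filter_zero_add_ite_eq σ hσ hab (c := c) (m := p ^ n)
    fun t ht => card_filter_pow_add_self_eq hK ht
  have hquad :=
    card_filter_fixed_sq_eq_one_add σ h2 η hη0 hη1 hη2 ((σ a + b) ^ 2 - 4 * (σ c + c))
  rw [← card_filter_fixed_quadratic_eq_card_sq σ h2 (B := σ a + b) hab] at hquad
  simp only [σ, iterateFrobenius_def, ← pow_succ] at hcount hquad
  have hq0 : p ^ n ≠ 0 := pow_ne_zero n hp.ne_zero
  by_cases hT : (a ^ 2 - a * b + c) ^ p ^ n + (a ^ 2 - a * b + c) = 0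
  · simp only [hT, ne_eq, not_true_eq_false, if_true, if_false] at hcount ⊢
    split_ifs at hcount ⊢ <;> omega
  · have hγ0 : a ^ 2 - a * b + c ≠ 0 := fun h => hT (by rw [h, zero_pow hq0, add_zero])
    simp only [hT, hγ0, ne_eq, not_false_eq_true, if_true, if_false] at hcount ⊢
    omega

/-- Let `a, b, c ∈ F_{q²}` with `a^q + b ∈ F_q`. Then the number of zeros of
`x^{q+1} + x² + a·x^q + b·x + c` in `F_{q²}` equals `η((a^q + b)² − 4Tr(c)) + M₀`, where
`M₀ = 1` if `Tr(a² − ab + c) ≠ 0`, `M₀ = q` if `a² − ab + c = 0`, and `M₀ = 0` otherwise.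
Here `q` is a power of an odd prime, `K` plays the role of `F_{q²}`,
`F_q = {x : K | x^q = x}`, `Tr(x) = x^q + x` and `η` is the quadratic character of `F_q`
(with values in `ℤ`, extended by `η(0) = 0`). -/
theorem stmt5 (p n q : ℕ) (hp : p.Prime) (hp2 : p ≠ 2) (hn : 0 < n)
    (hq : q = p ^ n)
    (K : Type) [Field K] [Fintype K] (hK : Fintype.card K = q ^ 2)
    (η : K → ℤ) (hη0 : η 0 = 0)
    (hη1 : ∀ x : K, x ≠ 0 → (∃ y : K, y ^ q = y ∧ y ^ 2 = x) → η x = 1)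
    (hη2 : ∀ x : K, x ≠ 0 → ¬ (∃ y : K, y ^ q = y ∧ y ^ 2 = x) → η x = -1)
    (a b c : K) (hab : (a ^ q + b) ^ q = a ^ q + b)
    (γ : K) (hγ : γ = a ^ 2 - a * b + c)
    (M₀ : ℤ)
    (hM₀ : M₀ = if γ ^ q + γ ≠ 0 then 1 else if γ = 0 then (q : ℤ) else 0) :
    ((Finset.univ.filter
        (fun x : K => x ^ (q + 1) + x ^ 2 + a * x ^ q + b * x + c = 0)).card : ℤ) =
      η ((a ^ q + b) ^ 2 - 4 * (c ^ q + c)) + M₀ :=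
  stmt5_general p n q hp hp2 hq K hK η hη0 hη1 hη2 a b c hab γ hγ M₀ hM₀
end

section
/- Let β ∈ F_{q²} with β ≠ 0, and let a, c ∈ F_{q²}, b = −a^q. Then the number of zeros of −β^q·x^{2q} + β·x² + a·x^q + b·x + c in F_{q²} equals: 0 if Tr(c) ≠ 0; q − η(N(β)) if Tr(c) = 0 and β^{-1}a^{2q} − β^{-q}a² − 4c ≠ 0; and q + η(N(β))·(q − 1) if Tr(c) = 0 and β^{-1}a^{2q} − β^{-q}a² − 4c = 0. -/
open Finset
open scoped Classical

/-!
With `g(x) = βx² − a^q x` the polynomial equals `c − (g(x)^q − g(x))`, so it has a root only if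
`c` lies in the image of `y ↦ y^q − y`, which is exactly the kernel of the trace. Writing
`c = t^q − t`, the roots are the `x` with `g(x) − t ∈ 𝔽_q`. Counting the roots of each quadratic
`g(x) − t − s` through its discriminant `4β(s + v)`, where `v = t + a^{2q}/(4β)`, gives
`q + χ(β) ∑_{s ∈ 𝔽_q} χ(s + v)`, with `χ` the quadratic character of `𝔽_{q²}` and
`χ(β) = η(N(β))`. Every element of `𝔽_q` is a square in `𝔽_{q²}`, so the sum is `q − 1` when
`v ∈ 𝔽_q`; otherwise `𝔽_q + 𝔽_q v = 𝔽_{q²}` and `∑ χ = 0` force it to be `−1`. Finally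
`v ∈ 𝔽_q` exactly when the discriminant condition holds.
-/

theorem pow_sub_one_eq_one_of_pow_eq_self {M : Type*} [MonoidWithZero M] [IsCancelMulZero M]
    {x : M} {q : ℕ} (hx : x ^ q = x) (hx0 : x ≠ 0) : x ^ (q - 1) = 1 := by
  cases q with
  | zero => simp
  | succ q => rwa [pow_succ, mul_eq_right₀ hx0] at hx

namespace FiniteField

variable {K : Type*} [Field K] [Fintype K] {q : ℕ}

theorem one_lt_of_card_eq_sq (hK : Fintype.card K = q ^ 2) : 1 < q :=
  (Nat.one_lt_pow_iff two_ne_zero).1 (hK ▸ Fintype.one_lt_card)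

theorem ringChar_ne_two_of_card_eq_sq (hK : Fintype.card K = q ^ 2) (hq : Odd q) :
    ringChar K ≠ 2 := by
  rw [Ne, even_card_iff_char_two, hK, Nat.odd_iff.1 (hq.pow (n := 2))]
  exact one_ne_zero

theorem add_pow_of_card_eq_sq (hK : Fintype.card K = q ^ 2) (x y : K) :
    (x + y) ^ q = x ^ q + y ^ q := by
  obtain ⟨p, _⟩ := CharP.exists K
  have := Fact.mk (CharP.char_is_prime K p)
  obtain ⟨m, hp, hcard⟩ := card K p
  obtain ⟨i, -, rfl⟩ := (Nat.dvd_prime_pow hp).1 (hcard ▸ hK ▸ dvd_pow_self q two_ne_zero)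
  exact add_pow_char_pow x y p i

theorem pow_pow_of_card_eq_sq (hK : Fintype.card K = q ^ 2) (x : K) : (x ^ q) ^ q = x := by
  rw [← pow_mul, ← sq, ← hK, pow_card]

def powRingHom (hK : Fintype.card K = q ^ 2) : K →+* K where
  toFun x := x ^ q
  map_one' := one_pow q
  map_mul' x y := mul_pow x y q
  map_zero' := zero_pow (one_lt_of_card_eq_sq hK).ne_bot
  map_add' := add_pow_of_card_eq_sq hK

@[simp]
theorem powRingHom_apply (hK : Fintype.card K = q ^ 2) (x : K) : powRingHom hK x = x ^ q := rfl

theorem sub_pow_of_card_eq_sq (hK : Fintype.card K = q ^ 2) (x y : K) :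
    (x - y) ^ q = x ^ q - y ^ q :=
  map_sub (powRingHom hK) x y

/-- For `M = 𝔽_{q²}` this is the subfield `𝔽_q`. -/
noncomputable def frobFixed (M : Type*) [Monoid M] [Fintype M] (q : ℕ) : Finset M :=
  {x | x ^ q = x}

@[simp]
theorem mem_frobFixed {M : Type*} [Monoid M] [Fintype M] {q : ℕ} {x : M} :
    x ∈ frobFixed M q ↔ x ^ q = x := by
  simp [frobFixed]

open Polynomial in
theorem card_filter_pow_eq_mul_le (hq : 2 ≤ q) (d : K) : #{x : K | x ^ q = d * x} ≤ q := by
  have hdeg : (X ^ q - C d * X : K[X]).natDegree = q := by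
    rw [natDegree_sub_eq_left_of_natDegree_lt] <;> compute_degree!
  have hne : (X ^ q - C d * X : K[X]) ≠ 0 := ne_zero_of_natDegree_gt (n := 0) (by omega)
  refine hdeg ▸ card_le_degree_of_subset_roots fun x hx => ?_
  simp_all [mem_roots hne, sub_eq_zero]

theorem card_frobFixed_mul_card_image (hK : Fintype.card K = q ^ 2) :
    #(frobFixed K q) * #(univ.image fun t : K => t ^ q - t) = q ^ 2 := by
  let φ : K →+ K := (powRingHom hK).toAddMonoidHom - AddMonoidHom.id K
  have hker : Nat.card φ.ker = #(frobFixed K q) := by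
    rw [Nat.card_eq_fintype_card, Fintype.card_subtype]
    congr 1; ext x; simp [φ, sub_eq_zero]
  have hrange : Nat.card φ.range = #(univ.image fun t : K => t ^ q - t) := by
    rw [Nat.card_eq_fintype_card, Fintype.card_subtype]
    congr 1; ext x; simp [φ]
  rw [← hker, ← hrange, ← AddSubgroup.index_ker, AddSubgroup.card_mul_index,
    Nat.card_eq_fintype_card, hK]

theorem image_pow_sub_self_subset (hK : Fintype.card K = q ^ 2) :
    (univ.image fun t : K => t ^ q - t) ⊆ ({x | x ^ q = -x} : Finset K) := by
  intro x hx
  obtain ⟨t, -, rfl⟩ := mem_image.1 hx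
  simp [sub_pow_of_card_eq_sq hK, pow_pow_of_card_eq_sq hK]

theorem card_frobFixed (hK : Fintype.card K = q ^ 2) : #(frobFixed K q) = q := by
  have hq := one_lt_of_card_eq_sq hK
  have hS : #(frobFixed K q) ≤ q := by
    simpa [frobFixed] using card_filter_pow_eq_mul_le hq (1 : K)
  have hA := (card_le_card (image_pow_sub_self_subset hK)).trans
    (by simpa using card_filter_pow_eq_mul_le hq (-1 : K))
  have := card_frobFixed_mul_card_image hK
  nlinarith

theorem exists_pow_sub_self_eq (hK : Fintype.card K = q ^ 2) {c : K} (hc : c ^ q + c = 0) :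
    ∃ t : K, t ^ q - t = c := by
  have hq := one_lt_of_card_eq_sq hK
  have himage : (univ.image fun t : K => t ^ q - t) = ({x | x ^ q = -x} : Finset K) := by
    refine eq_of_subset_of_card_le (image_pow_sub_self_subset hK) ?_
    have := card_frobFixed_mul_card_image hK
    rw [card_frobFixed hK, sq] at this
    rw [Nat.eq_of_mul_eq_mul_left (by omega) this]
    simpa using card_filter_pow_eq_mul_le hq (-1 : K)
  have hc' : c ∈ ({x | x ^ q = -x} : Finset K) := by simpa [eq_neg_iff_add_eq_zero] using hc
  simpa [← himage] using hc'

theorem pow_card_div_two_eq (hK : Fintype.card K = q ^ 2) (hq : Odd q) (x : K) :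
    x ^ (Fintype.card K / 2) = (x ^ (q + 1)) ^ ((q - 1) / 2) := by
  obtain ⟨k, rfl⟩ := hq
  have hdiv : (2 * k + 1) ^ 2 / 2 = (2 * k + 1 + 1) * ((2 * k + 1 - 1) / 2) := by
    rw [show (2 * k + 1 - 1) / 2 = k by omega,
      show (2 * k + 1) ^ 2 = 1 + 2 * ((2 * k + 1 + 1) * k) by ring,
      Nat.add_mul_div_left _ _ two_pos]
    simp
  rw [hK, hdiv, pow_mul]

theorem isSquare_of_pow_eq_self (hK : Fintype.card K = q ^ 2) (hq : Odd q) {x : K}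
    (hx : x ^ q = x) : IsSquare x := by
  rcases eq_or_ne x 0 with rfl | hx0
  · exact IsSquare.zero
  rw [isSquare_iff (ringChar_ne_two_of_card_eq_sq hK hq) hx0, pow_card_div_two_eq hK hq,
    pow_succ, hx, ← sq, ← pow_mul, Nat.two_mul_div_two_of_even (Nat.Odd.sub_odd hq odd_one)]
  exact pow_sub_one_eq_one_of_pow_eq_self hx hx0

theorem isSquare_iff_exists_sq_eq_pow_succ (hK : Fintype.card K = q ^ 2) (hq : Odd q) {β : K}
    (hβ : β ≠ 0) : IsSquare β ↔ ∃ y : K, y ^ q = y ∧ y ^ 2 = β ^ (q + 1) := by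
  constructor
  · rintro ⟨w, rfl⟩
    refine ⟨w ^ (q + 1), ?_, by ring⟩
    rw [pow_succ, mul_pow, pow_pow_of_card_eq_sq hK, mul_comm, ← pow_succ]
  · rintro ⟨y, hy, hy2⟩
    have hy0 : y ≠ 0 := by
      rintro rfl
      exact pow_ne_zero (q + 1) hβ (by simpa using hy2.symm)
    rw [isSquare_iff (ringChar_ne_two_of_card_eq_sq hK hq) hβ, pow_card_div_two_eq hK hq, ← hy2,
      ← pow_mul, Nat.two_mul_div_two_of_even (Nat.Odd.sub_odd hq odd_one)]
    exact pow_sub_one_eq_one_of_pow_eq_self hy hy0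

theorem zero_mem_frobFixed {M : Type*} [MonoidWithZero M] [Fintype M] {q : ℕ} (hq : q ≠ 0) :
    (0 : M) ∈ frobFixed M q := by
  simp [zero_pow hq]

theorem sum_quadraticChar_frobFixed (hK : Fintype.card K = q ^ 2) (hq : Odd q) :
    ∑ s ∈ frobFixed K q, quadraticChar K s = q - 1 := by
  have h0 := zero_mem_frobFixed (M := K) hq.pos.ne'
  rw [← sum_erase _ (quadraticChar_zero (F := K)),
    sum_congr rfl fun s hs => (quadraticChar_one_iff_isSquare (mem_erase.1 hs).1).2
      (isSquare_of_pow_eq_self hK hq (mem_frobFixed.1 (mem_erase.1 hs).2)),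
    sum_const, card_erase_of_mem h0, card_frobFixed hK, nsmul_one, Nat.cast_pred hq.pos]

theorem sum_quadraticChar_frobFixed_add_of_pow_eq_self (hK : Fintype.card K = q ^ 2)
    (hq : Odd q) {v : K} (hv : v ^ q = v) :
    ∑ s ∈ frobFixed K q, quadraticChar K (s + v) = q - 1 := by
  rw [← sum_quadraticChar_frobFixed hK hq]
  refine sum_nbij' (· + v) (· - v) ?_ ?_ (by simp) (by simp) (by simp)
  · intro s hs; simp_all [add_pow_of_card_eq_sq hK]
  · intro s hs; simp_all [sub_pow_of_card_eq_sq hK]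

theorem injOn_add_mul_of_pow_ne_self (hK : Fintype.card K = q ^ 2) {v : K} (hv : v ^ q ≠ v) :
    Set.InjOn (fun p : K × K => p.2 + p.1 * v) ↑(frobFixed K q ×ˢ frobFixed K q) := by
  rintro ⟨r₁, s₁⟩ h₁ ⟨r₂, s₂⟩ h₂ heq
  simp only [coe_product, Set.mem_prod, mem_coe, mem_frobFixed] at h₁ h₂ heq
  by_cases hr : r₁ = r₂
  · subst hr
    simpa using heq
  · refine absurd ?_ hv
    have hv' : v = (s₂ - s₁) / (r₁ - r₂) := by
      field_simp [sub_ne_zero.2 hr]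
      linear_combination heq
    rw [hv', div_pow, sub_pow_of_card_eq_sq hK, sub_pow_of_card_eq_sq hK, h₁.1, h₁.2, h₂.1, h₂.2]

theorem sum_sum_frobFixed_add_mul (hK : Fintype.card K = q ^ 2) {v : K} (hv : v ^ q ≠ v)
    (f : K → ℤ) : ∑ r ∈ frobFixed K q, ∑ s ∈ frobFixed K q, f (s + r * v) = ∑ x, f x := by
  have hinj := injOn_add_mul_of_pow_ne_self hK hv
  have himage : (frobFixed K q ×ˢ frobFixed K q).image (fun p : K × K => p.2 + p.1 * v) = univ := by
    refine eq_univ_of_card _ ?_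
    rw [card_image_of_injOn hinj, card_product, card_frobFixed hK, hK, sq]
  rw [← sum_product', ← himage, sum_image hinj]

theorem sum_quadraticChar_frobFixed_add_mul (hK : Fintype.card K = q ^ 2) (hq : Odd q) {r : K}
    (hr : r ^ q = r) (hr0 : r ≠ 0) (v : K) :
    ∑ s ∈ frobFixed K q, quadraticChar K (s + r * v) =
      ∑ s ∈ frobFixed K q, quadraticChar K (s + v) := by
  have hχr : quadraticChar K r = 1 :=
    (quadraticChar_one_iff_isSquare hr0).2 (isSquare_of_pow_eq_self hK hq hr)
  refine sum_nbij' (r⁻¹ * ·) (r * ·) ?_ ?_ ?_ ?_ ?_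
  · intro s hs; simp_all [mul_pow, inv_pow]
  · intro s hs; simp_all [mul_pow]
  · intro s _; field_simp
  · intro s _; field_simp
  · intro s _
    rw [show s + r * v = r * (r⁻¹ * s + v) by field_simp, map_mul, hχr, one_mul]

theorem sum_quadraticChar_frobFixed_add_of_pow_ne_self (hK : Fintype.card K = q ^ 2)
    (hq : Odd q) {v : K} (hv : v ^ q ≠ v) :
    ∑ s ∈ frobFixed K q, quadraticChar K (s + v) = -1 := by
  set T := ∑ s ∈ frobFixed K q, quadraticChar K (s + v)
  have h := sum_sum_frobFixed_add_mul hK hv (quadraticChar K)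
  rw [quadraticChar_sum_zero (ringChar_ne_two_of_card_eq_sq hK hq),
    ← add_sum_erase _ _ (zero_mem_frobFixed hq.pos.ne')] at h
  simp only [zero_mul, add_zero] at h
  rw [sum_quadraticChar_frobFixed hK hq, sum_congr rfl fun r hr =>
      sum_quadraticChar_frobFixed_add_mul hK hq (mem_frobFixed.1 (mem_erase.1 hr).2)
        (mem_erase.1 hr).1 v,
    sum_const, card_erase_of_mem (zero_mem_frobFixed hq.pos.ne'), card_frobFixed hK,
    nsmul_eq_mul, Nat.cast_pred hq.pos] at h
  have hq1 : (q : ℤ) - 1 ≠ 0 := by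
    have := one_lt_of_card_eq_sq hK
    omega
  have : ((q : ℤ) - 1) * (T + 1) = 0 := by linear_combination h
  linear_combination (mul_eq_zero.1 this).resolve_left hq1

theorem card_quadratic_eq_zero {F : Type*} [Field F] [Fintype F] (hF : ringChar F ≠ 2) {a : F}
    (ha : a ≠ 0) (b c : F) :
    (#{x : F | a * (x * x) + b * x + c = 0} : ℤ) = quadraticChar F (discrim a b c) + 1 := by
  have := NeZero.mk (Ring.two_ne_zero hF)
  have h2a : 2 * a ≠ 0 := mul_ne_zero (Ring.two_ne_zero hF) ha
  rw [← quadraticChar_card_sqrts hF, Set.toFinset_ofPred, Nat.cast_inj]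
  simp_rw [quadratic_eq_zero_iff_discrim_eq_sq ha]
  refine card_nbij' (fun x => 2 * a * x + b) (fun y => (y - b) / (2 * a)) ?_ ?_ ?_ ?_
  · intro x hx; simp_all
  · intro y hy; simp_all [mul_div_cancel₀ _ h2a]
  · intro x _; field_simp; ring
  · intro y _; simp [mul_div_cancel₀ _ h2a]

theorem card_pow_sub_self_eq (hK : Fintype.card K = q ^ 2) (hq : Odd q) {β : K} (hβ : β ≠ 0)
    (b t : K) :
    (#{x : K | (β * x ^ 2 + b * x) ^ q - (β * x ^ 2 + b * x) = t ^ q - t} : ℤ) =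
      q + quadraticChar K β *
        ∑ s ∈ frobFixed K q, quadraticChar K (s + (t + b ^ 2 / (4 * β))) := by
  have hK2 := ringChar_ne_two_of_card_eq_sq hK hq
  have h2 : (2 : K) ≠ 0 := Ring.two_ne_zero hK2
  have h4 : quadraticChar K 4 = 1 := by
    have := quadraticChar_sq_one' h2
    norm_num at this
    exact this
  have hfilter : univ.filter (fun x : K => (β * x ^ 2 + b * x) ^ q - (β * x ^ 2 + b * x) =
      t ^ q - t) = univ.filter fun x => β * x ^ 2 + b * x - t ∈ frobFixed K q := by
    refine filter_congr fun x _ => ?_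
    rw [mem_frobFixed, sub_pow_of_card_eq_sq hK]
    constructor <;> intro h <;> linear_combination h
  have hfiber : ∀ s ∈ frobFixed K q,
      (#{x ∈ ({x | β * x ^ 2 + b * x - t ∈ frobFixed K q} : Finset K) |
        β * x ^ 2 + b * x - t = s} : ℤ) =
      quadraticChar K β * quadraticChar K (s + (t + b ^ 2 / (4 * β))) + 1 := by
    intro s hs
    have hdiscrim : discrim β b (-(t + s)) = 4 * β * (s + (t + b ^ 2 / (4 * β))) := by
      have : (4 : K) ≠ 0 := by rw [show (4 : K) = 2 * 2 by norm_num]; exact mul_ne_zero h2 h2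
      rw [discrim]; field_simp; ring
    have hχ : quadraticChar K β * quadraticChar K (s + (t + b ^ 2 / (4 * β))) =
        quadraticChar K (discrim β b (-(t + s))) := by
      rw [hdiscrim, map_mul, map_mul, h4, one_mul]
    rw [hχ, ← card_quadratic_eq_zero hK2 hβ, filter_filter]
    congr 2
    ext x
    simp only [mem_filter, mem_univ, true_and]
    constructor
    · rintro ⟨-, h⟩; linear_combination h
    · intro h
      have h' : β * x ^ 2 + b * x - t = s := by linear_combination h
      exact ⟨h' ▸ hs, h'⟩
  rw [hfilter, card_eq_sum_card_fiberwise (f := fun x => β * x ^ 2 + b * x - t)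
      (s := univ.filter fun x => β * x ^ 2 + b * x - t ∈ frobFixed K q) (t := frobFixed K q)
      fun x hx => (mem_filter.1 hx).2,
    Nat.cast_sum, sum_congr rfl hfiber, sum_add_distrib, ← mul_sum, sum_const, card_frobFixed hK,
    nsmul_one, add_comm]

theorem pow_add_self_eq_zero_of_pow_sub_self_eq (hK : Fintype.card K = q ^ 2) {y c : K}
    (h : y ^ q - y = c) : c ^ q + c = 0 := by
  rw [← h, sub_pow_of_card_eq_sq hK, pow_pow_of_card_eq_sq hK]
  ring

theorem eq_zero_iff_pow_sub_self_eq (hK : Fintype.card K = q ^ 2) (β a c x : K) :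
    -β ^ q * x ^ (2 * q) + β * x ^ 2 + a * x ^ q + -a ^ q * x + c = 0 ↔
      (β * x ^ 2 + -a ^ q * x) ^ q - (β * x ^ 2 + -a ^ q * x) = c := by
  have hneg : (-a ^ q) ^ q = -a := by
    rw [← powRingHom_apply hK, map_neg, powRingHom_apply, pow_pow_of_card_eq_sq hK]
  rw [add_pow_of_card_eq_sq hK, mul_pow, mul_pow, hneg, ← pow_mul, mul_comm 2 q]
  constructor <;> intro h <;> linear_combination -h

theorem pow_eq_self_iff_discr_eq_zero (hK : Fintype.card K = q ^ 2) (hq : Odd q) {β : K}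
    (hβ : β ≠ 0) {a c t : K} (ht : t ^ q - t = c) :
    (t + (-a ^ q) ^ 2 / (4 * β)) ^ q = t + (-a ^ q) ^ 2 / (4 * β) ↔
      β⁻¹ * a ^ (2 * q) - (β ^ q)⁻¹ * a ^ 2 - 4 * c = 0 := by
  have h4 : (4 : K) ≠ 0 := by
    rw [show (4 : K) = 2 ^ 2 by norm_num]
    exact pow_ne_zero 2 (Ring.two_ne_zero (ringChar_ne_two_of_card_eq_sq hK hq))
  have h4q : (4 : K) ^ q = 4 := map_ofNat (powRingHom hK) 4
  have hsub : (t + (-a ^ q) ^ 2 / (4 * β)) ^ q - (t + (-a ^ q) ^ 2 / (4 * β)) =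
      -(β⁻¹ * a ^ (2 * q) - (β ^ q)⁻¹ * a ^ 2 - 4 * c) / 4 := by
    rw [add_pow_of_card_eq_sq hK, div_pow, mul_pow, h4q, neg_sq, ← pow_mul, mul_comm 2 q, pow_mul,
      pow_pow_of_card_eq_sq hK, ← ht]
    field_simp
    ring
  rw [← sub_eq_zero, hsub, div_eq_zero_iff, neg_eq_zero, or_iff_left h4]

end FiniteField

open FiniteField

theorem stmt7_general (p n q : ℕ) (hp : p.Prime) (hp2 : p ≠ 2)
    (hq : q = p ^ n)
    (K : Type) [Field K] [Fintype K] (hK : Fintype.card K = q ^ 2)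
    (η : K → ℤ)
    (hη1 : ∀ x : K, x ≠ 0 → (∃ y : K, y ^ q = y ∧ y ^ 2 = x) → η x = 1)
    (hη2 : ∀ x : K, x ≠ 0 → ¬ (∃ y : K, y ^ q = y ∧ y ^ 2 = x) → η x = -1)
    (β a b c : K) (hβ : β ≠ 0) (hb : b = -a ^ q)
    (Z : ℤ)
    (hZ : Z = ((Finset.univ.filter (fun x : K =>
      -β ^ q * x ^ (2 * q) + β * x ^ 2 + a * x ^ q + b * x + c = 0)).card : ℤ)) :
    (c ^ q + c ≠ 0 → Z = 0) ∧
    (c ^ q + c = 0 → β⁻¹ * a ^ (2 * q) - (β ^ q)⁻¹ * a ^ 2 - 4 * c ≠ 0 →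
      Z = (q : ℤ) - η (β ^ (q + 1))) ∧
    (c ^ q + c = 0 → β⁻¹ * a ^ (2 * q) - (β ^ q)⁻¹ * a ^ 2 - 4 * c = 0 →
      Z = (q : ℤ) + η (β ^ (q + 1)) * ((q : ℤ) - 1)) := by
  subst hb
  have hqodd : Odd q := hq ▸ (hp.odd_of_ne_two hp2).pow
  have hsq := isSquare_iff_exists_sq_eq_pow_succ hK hqodd hβ
  have hχη : quadraticChar K β = η (β ^ (q + 1)) := by
    by_cases h : IsSquare β
    · rw [(quadraticChar_one_iff_isSquare hβ).2 h, hη1 _ (pow_ne_zero _ hβ) (hsq.1 h)]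
    · rw [quadraticChar_neg_one_iff_not_isSquare.2 h, hη2 _ (pow_ne_zero _ hβ) (mt hsq.2 h)]
  simp only [eq_zero_iff_pow_sub_self_eq hK] at hZ
  refine ⟨fun hc => ?_, fun hc hD => ?_, fun hc hD => ?_⟩
  · rw [hZ, Nat.cast_eq_zero, card_eq_zero, filter_eq_empty_iff]
    exact fun x _ hx => hc (pow_add_self_eq_zero_of_pow_sub_self_eq hK hx)
  all_goals
    obtain ⟨t, ht⟩ := exists_pow_sub_self_eq hK hc
    rw [hZ, ← ht, card_pow_sub_self_eq hK hqodd hβ, hχη]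
  · rw [sum_quadraticChar_frobFixed_add_of_pow_ne_self hK hqodd
      (mt (pow_eq_self_iff_discr_eq_zero hK hqodd hβ ht).1 hD)]
    ring
  · rw [sum_quadraticChar_frobFixed_add_of_pow_eq_self hK hqodd
      ((pow_eq_self_iff_discr_eq_zero hK hqodd hβ ht).2 hD)]

/-- Let `β ∈ F_{q²}` with `β ≠ 0`, let `a, c ∈ F_{q²}` and `b = −a^q`. Then
the number of zeros of `−β^q·x^{2q} + β·x² + a·x^q + b·x + c` in `F_{q²}` equals: `0` if
`Tr(c) ≠ 0`; `q − η(N(β))` if `Tr(c) = 0` and `β⁻¹a^{2q} − β^{−q}a² − 4c ≠ 0`; and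
`q + η(N(β))·(q − 1)` if `Tr(c) = 0` and `β⁻¹a^{2q} − β^{−q}a² − 4c = 0`.
Here `q` is a power of an odd prime, `K` plays the role of `F_{q²}`,
`F_q = {x : K | x^q = x}`, `Tr(x) = x^q + x`, `N(x) = x^{q+1}` and `η` is the quadratic
character of `F_q` (values in `ℤ`, `η(0) = 0`). -/
theorem stmt7 (p n q : ℕ) (hp : p.Prime) (hp2 : p ≠ 2) (hn : 0 < n)
    (hq : q = p ^ n)
    (K : Type) [Field K] [Fintype K] (hK : Fintype.card K = q ^ 2)
    (η : K → ℤ) (hη0 : η 0 = 0)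
    (hη1 : ∀ x : K, x ≠ 0 → (∃ y : K, y ^ q = y ∧ y ^ 2 = x) → η x = 1)
    (hη2 : ∀ x : K, x ≠ 0 → ¬ (∃ y : K, y ^ q = y ∧ y ^ 2 = x) → η x = -1)
    (β a b c : K) (hβ : β ≠ 0) (hb : b = -a ^ q)
    (Z : ℤ)
    (hZ : Z = ((Finset.univ.filter (fun x : K =>
      -β ^ q * x ^ (2 * q) + β * x ^ 2 + a * x ^ q + b * x + c = 0)).card : ℤ)) :
    (c ^ q + c ≠ 0 → Z = 0) ∧
    (c ^ q + c = 0 → β⁻¹ * a ^ (2 * q) - (β ^ q)⁻¹ * a ^ 2 - 4 * c ≠ 0 →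
      Z = (q : ℤ) - η (β ^ (q + 1))) ∧
    (c ^ q + c = 0 → β⁻¹ * a ^ (2 * q) - (β ^ q)⁻¹ * a ^ 2 - 4 * c = 0 →
      Z = (q : ℤ) + η (β ^ (q + 1)) * ((q : ℤ) - 1)) :=
  stmt7_general p n q hp hp2 hq K hK η hη1 hη2 β a b c hβ hb Z hZ
end

section
/- Let q be a power of an odd prime, let β ∈ F_{q²} with β ≠ 1 and N(β) = 1, let a, b, c ∈ F_{q²} and d ∈ F_{q²} \ F_q. Then (x^{q+1} + β·x² + a·x^q + b·x + c)/(x^q + x + d) is not a permutation rational function of F_{q²}. -/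
/-!
Only two properties of `φ x = x ^ q` matter: it is an involutive ring endomorphism, and the field
has characteristic `≠ 2`. On a fibre `φ x + x = r` of the trace, `φ x = r - x`, so the denominator is the constant `r + d`
and the numerator is a quadratic polynomial in `x` with leading coefficient `β - 1 ≠ 0`; it takes
equal values at `x` and `y` as soon as `(β - 1) (x + y) = a - b - r`. Since `N(β) = 1` forces
`Tr (β - 1)⁻¹ = -1`, the choice `r = Tr ((a - b) / (β - 1))` puts the vertex of that quadratic on
the fibre, and the fibre, a line in the direction of the nonzero trace-zero element `φ d - d`,
contains two distinct points symmetric about it.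
-/

open Function

section InvolutiveRingHom

variable {K : Type*} [Field K] (φ : K →+* K)

lemma apply_inv_sub_one_add_inv_sub_one {β : K} (hβ : φ β * β = 1) (hβ1 : β ≠ 1) :
    φ (β - 1)⁻¹ + (β - 1)⁻¹ = -1 := by
  have hβ0 : β ≠ 0 := by rintro rfl; simp at hβ
  have hφβ : φ β = β⁻¹ := eq_inv_of_mul_eq_one_left hβ
  have : β - 1 ≠ 0 := sub_ne_zero.mpr hβ1
  rw [map_inv₀, map_sub, map_one, hφβ]
  field_simp
  ring

lemma exists_apply_eq_sub_and_mul_two_mul_eq (hφ : Involutive φ) (h2 : (2 : K) ≠ 0) {β : K}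
    (hβ : φ β * β = 1) (hβ1 : β ≠ 1) (e : K) :
    ∃ r z : K, φ z = r - z ∧ (β - 1) * (2 * z) = e - r := by
  obtain ⟨θ, hθ⟩ : ∃ θ, θ = (β - 1)⁻¹ := ⟨_, rfl⟩
  have hθβ : (β - 1) * θ = 1 := hθ ▸ mul_inv_cancel₀ (sub_ne_zero.mpr hβ1)
  have hθtr : φ θ + θ = -1 := hθ ▸ apply_inv_sub_one_add_inv_sub_one φ hβ hβ1
  obtain ⟨r, hr⟩ : ∃ r, r = φ e * φ θ + e * θ := ⟨_, rfl⟩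
  have hφr : φ r = r := by rw [hr, map_add, map_mul, map_mul, hφ, hφ, add_comm]
  refine ⟨r, (e - r) * θ / 2, ?_, ?_⟩
  · rw [map_div₀, map_mul, map_sub, hφr, map_ofNat]
    field_simp
    linear_combination (-r) * hθtr - hr
  · field_simp
    linear_combination (e - r) * hθβ

lemma div_trace_add_eq_of_apply_eq_sub {β a b c d r x y : K} (hx : φ x = r - x)
    (hy : φ y = r - y) (hxy : (β - 1) * (x + y) = a - b - r) :
    (φ x * x + β * x ^ 2 + a * φ x + b * x + c) / (φ x + x + d) =
      (φ y * y + β * y ^ 2 + a * φ y + b * y + c) / (φ y + y + d) := by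
  rw [hx, hy, sub_add_cancel, sub_add_cancel]
  congr 1
  linear_combination (x - y) * hxy

theorem not_injective_div_trace_add (hφ : Involutive φ) (h2 : (2 : K) ≠ 0) {β : K}
    (hβ : φ β * β = 1) (hβ1 : β ≠ 1) (a b c : K) {d : K} (hd : φ d ≠ d) :
    ¬ Injective fun x => (φ x * x + β * x ^ 2 + a * φ x + b * x + c) / (φ x + x + d) := by
  obtain ⟨r, z, hz, hzβ⟩ := exists_apply_eq_sub_and_mul_two_mul_eq φ hφ h2 hβ hβ1 (a - b)
  obtain ⟨w, hw⟩ : ∃ w, w = φ d - d := ⟨_, rfl⟩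
  have hφw : φ w = -w := by rw [hw, map_sub, hφ]; ring
  have hw0 : 2 * w ≠ 0 := mul_ne_zero h2 (hw ▸ sub_ne_zero.mpr hd)
  intro hinj
  have hcollide : z + w = z - w := hinj <| div_trace_add_eq_of_apply_eq_sub φ
    (by rw [map_add, hz, hφw]; ring) (by rw [map_sub, hz, hφw]; ring) (by linear_combination hzβ)
  exact hw0 (by linear_combination hcollide)

end InvolutiveRingHom

theorem stmt9_general (p n q : ℕ) (hp : p.Prime) (hp2 : p ≠ 2)
    (hq : q = p ^ n)
    (K : Type) [Field K] [Fintype K] (hK : Fintype.card K = q ^ 2)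
    (β : K) (hβ1 : β ≠ 1) (hβN : β ^ (q + 1) = 1)
    (a b c d : K) (hd : d ^ q ≠ d) :
    ¬ Function.Bijective (fun x : K =>
        (x ^ (q + 1) + β * x ^ 2 + a * x ^ q + b * x + c) / (x ^ q + x + d)) := by
  have : Fact p.Prime := ⟨hp⟩
  have : CharP K p := charP_of_card_eq_prime_pow (f := n * 2) (by rw [hK, hq, pow_mul])
  have hφq (x : K) : iterateFrobenius K p n x = x ^ q := by rw [iterateFrobenius_def, hq]
  have hφ : Involutive (iterateFrobenius K p n) := fun x => by
    rw [hφq, hφq, ← pow_mul, ← sq, ← hK, FiniteField.pow_card]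
  have h2 : (2 : K) ≠ 0 := Ring.two_ne_zero (by rwa [ringChar.eq K p])
  intro hbij
  refine not_injective_div_trace_add _ hφ h2 (β := β) ?_ hβ1 a b c (d := d) ?_ ?_
  · rwa [hφq, ← pow_succ]
  · rwa [hφq]
  · simpa only [hφq, pow_succ] using hbij.injective

/-- Let `q` be a power of an odd prime, `β ∈ F_{q²}` with `β ≠ 1` and
`N(β) = 1`, `a, b, c ∈ F_{q²}` and `d ∈ F_{q²} \ F_q`. Then
`(x^{q+1} + β·x² + a·x^q + b·x + c)/(x^q + x + d)` is not a permutation rational function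
of `F_{q²}`. Here `K` plays the role of `F_{q²}`, `N(x) = x^{q+1}`, and since `x^q + x + d`
has no zero in `F_{q²}`, being a permutation rational function is equivalent to the map
`x ↦ (x^{q+1} + β·x² + a·x^q + b·x + c)/(x^q + x + d)` permuting `F_{q²}`. -/
theorem stmt9 (p n q : ℕ) (hp : p.Prime) (hp2 : p ≠ 2) (hn : 0 < n)
    (hq : q = p ^ n)
    (K : Type) [Field K] [Fintype K] (hK : Fintype.card K = q ^ 2)
    (β : K) (hβ1 : β ≠ 1) (hβN : β ^ (q + 1) = 1)
    (a b c d : K) (hd : d ^ q ≠ d) :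
    ¬ Function.Bijective (fun x : K =>
        (x ^ (q + 1) + β * x ^ 2 + a * x ^ q + b * x + c) / (x ^ q + x + d)) :=
  stmt9_general p n q hp hp2 hq K hK β hβ1 hβN a b c d hd
end

section
/- Let a, b, c ∈ F_{q²} with a − b ∈ F_q and Tr(a² − ab + c) ≠ 0. Then the number of zeros of x^{q+1} + x² + a·x^q + b·x + c in F_{q²} equals the number of zeros in F_q of the quadratic x² + (a^q + b)·x + Tr(c). -/
open Finset
open scoped Classical

/-!
Write `σ x = x ^ q` and `T x = σ x + x`. Since `σ` is an involutive field automorphism fixing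
`a - b`, the polynomial `f = x^{q+1} + x² + a x^q + b x + c` satisfies `f x + σ (f x) = g (T x)`,
where `g` is the quadratic on the right, so `T` maps the zeros of `f` to the zeros of `g` in the
fixed field. Conversely `f x = x (T x - (a - b)) + a T x + c`, so `x` is recovered from `y = T x` as
`(a y + c) / (a - b - y)`. The denominator never vanishes at a zero of `g`, because
`g (a - b) = Tr (a² - ab + c)`.
-/

section Involution

variable {K : Type*} [Field K] (σ : K →+* K) (a b c : K)

def twistedQuadratic (x : K) : K := x * σ x + x ^ 2 + a * σ x + b * x + c

def traceQuadratic (y : K) : K := y ^ 2 + (σ a + b) * y + (σ c + c)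

variable {σ a b c}

theorem twistedQuadratic_eq (x : K) :
    twistedQuadratic σ a b c x = x * (σ x + x - (a - b)) + a * (σ x + x) + c := by
  unfold twistedQuadratic
  ring

theorem map_eq_of_map_sub_eq (hab : σ (a - b) = a - b) : σ b = σ a - a + b := by
  rw [map_sub] at hab
  linear_combination -hab

theorem twistedQuadratic_add_map (hσ : ∀ x, σ (σ x) = x) (hab : σ (a - b) = a - b) (x : K) :
    twistedQuadratic σ a b c x + σ (twistedQuadratic σ a b c x) =
      traceQuadratic σ a b c (σ x + x) := by
  simp only [twistedQuadratic, traceQuadratic, map_add, map_mul, map_pow, hσ,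
    map_eq_of_map_sub_eq hab]
  ring

theorem traceQuadratic_sub (hab : σ (a - b) = a - b) :
    traceQuadratic σ a b c (a - b) = σ (a ^ 2 - a * b + c) + (a ^ 2 - a * b + c) := by
  simp only [traceQuadratic, map_add, map_sub, map_mul, map_pow, map_eq_of_map_sub_eq hab]
  ring

theorem map_add_self_div_of_traceQuadratic_eq_zero (hab : σ (a - b) = a - b) {y : K}
    (hy : σ y = y) (hgy : traceQuadratic σ a b c y = 0) (hne : a - b - y ≠ 0) :
    σ ((a * y + c) / (a - b - y)) + (a * y + c) / (a - b - y) = y := by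
  rw [map_div₀, map_sub, hab, hy, map_add, map_mul, hy, ← add_div, div_eq_iff hne]
  unfold traceQuadratic at hgy
  linear_combination hgy

theorem eq_div_of_twistedQuadratic_eq_zero {x : K} (hfx : twistedQuadratic σ a b c x = 0)
    (hne : a - b - (σ x + x) ≠ 0) :
    x = (a * (σ x + x) + c) / (a - b - (σ x + x)) := by
  rw [eq_div_iff hne]
  rw [twistedQuadratic_eq] at hfx
  linear_combination -hfx

theorem card_twistedQuadratic_eq_zero [Fintype K] (hσ : ∀ x, σ (σ x) = x)
    (hab : σ (a - b) = a - b) (hγ : σ (a ^ 2 - a * b + c) + (a ^ 2 - a * b + c) ≠ 0) :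
    #{x | twistedQuadratic σ a b c x = 0} = #{y | σ y = y ∧ traceQuadratic σ a b c y = 0} := by
  have hne : ∀ y, traceQuadratic σ a b c y = 0 → a - b - y ≠ 0 := by
    rintro y hgy hy
    rw [← sub_eq_zero.mp hy, traceQuadratic_sub hab] at hgy
    exact hγ hgy
  have hroot : ∀ x, twistedQuadratic σ a b c x = 0 → traceQuadratic σ a b c (σ x + x) = 0 := by
    intro x hfx
    rw [← twistedQuadratic_add_map hσ hab, hfx, map_zero, add_zero]
  refine card_nbij' (fun x ↦ σ x + x) (fun y ↦ (a * y + c) / (a - b - y)) ?_ ?_ ?_ ?_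
  · intro x hx
    simp only [coe_filter, mem_univ, true_and, Set.mem_ofPred_eq] at hx ⊢
    exact ⟨by rw [map_add, hσ, add_comm], hroot x hx⟩
  · intro y hy
    simp only [coe_filter, mem_univ, true_and, Set.mem_ofPred_eq] at hy ⊢
    obtain ⟨hy, hgy⟩ := hy
    have hx := div_mul_cancel₀ (a * y + c) (hne y hgy)
    rw [twistedQuadratic_eq, map_add_self_div_of_traceQuadratic_eq_zero hab hy hgy (hne y hgy)]
    linear_combination -hx
  · intro x hx
    simp only [coe_filter, mem_univ, true_and, Set.mem_ofPred_eq] at hx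
    exact (eq_div_of_twistedQuadratic_eq_zero hx (hne _ (hroot x hx))).symm
  · intro y hy
    simp only [coe_filter, mem_univ, true_and, Set.mem_ofPred_eq] at hy
    exact map_add_self_div_of_traceQuadratic_eq_zero hab hy.1 hy.2 (hne y hy.2)

end Involution

theorem FiniteField.exists_ringHom_apply_eq_pow {K : Type*} [Field K] [Fintype K] {q : ℕ}
    (hq : q ∣ Fintype.card K) : ∃ σ : K →+* K, ∀ x, σ x = x ^ q := by
  obtain ⟨r, hr⟩ := CharP.exists K
  obtain ⟨m, hrp, hcard⟩ := FiniteField.card K r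
  have : Fact r.Prime := ⟨hrp⟩
  obtain ⟨i, -, rfl⟩ := (Nat.dvd_prime_pow hrp).mp (hcard ▸ hq)
  exact ⟨iterateFrobenius K r i, fun _ ↦ rfl⟩

theorem stmt11_general (q : ℕ)
    (K : Type) [Field K] [Fintype K] (hK : Fintype.card K = q ^ 2)
    (a b c : K) (hab : (a - b) ^ q = a - b)
    (hγ : (a ^ 2 - a * b + c) ^ q + (a ^ 2 - a * b + c) ≠ 0) :
    (Finset.univ.filter
        (fun x : K => x ^ (q + 1) + x ^ 2 + a * x ^ q + b * x + c = 0)).card =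
      (Finset.univ.filter
        (fun x : K => x ^ q = x ∧
          x ^ 2 + (a ^ q + b) * x + (c ^ q + c) = 0)).card := by
  obtain ⟨σ, hσ⟩ := FiniteField.exists_ringHom_apply_eq_pow (hK ▸ dvd_pow_self q two_ne_zero)
  have hσσ : ∀ x, σ (σ x) = x := fun x ↦ by
    rw [hσ, hσ, ← pow_mul, ← sq, ← hK, FiniteField.pow_card]
  have := card_twistedQuadratic_eq_zero (c := c) hσσ (by rwa [hσ]) (by rwa [hσ])
  simp only [twistedQuadratic, traceQuadratic, hσ] at this
  convert this using 4 with x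
  ring_nf

/-- Let `q` be any prime power and `a, b, c ∈ F_{q²}` with `a − b ∈ F_q` and
`Tr(a² − ab + c) ≠ 0`. Then the number of zeros of `x^{q+1} + x² + a·x^q + b·x + c` in
`F_{q²}` equals the number of zeros in `F_q` of `x² + (a^q + b)·x + Tr(c)`.
Here `K` plays the role of `F_{q²}`, `F_q = {x : K | x^q = x}` and `Tr(x) = x^q + x`. -/
theorem stmt11 (p n q : ℕ) (hp : p.Prime) (hn : 0 < n) (hq : q = p ^ n)
    (K : Type) [Field K] [Fintype K] (hK : Fintype.card K = q ^ 2)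
    (a b c : K) (hab : (a - b) ^ q = a - b)
    (hγ : (a ^ 2 - a * b + c) ^ q + (a ^ 2 - a * b + c) ≠ 0) :
    (Finset.univ.filter
        (fun x : K => x ^ (q + 1) + x ^ 2 + a * x ^ q + b * x + c = 0)).card =
      (Finset.univ.filter
        (fun x : K => x ^ q = x ∧
          x ^ 2 + (a ^ q + b) * x + (c ^ q + c) = 0)).card :=
  stmt11_general q K hK a b c hab hγ
end

section
/- Let q be a power of 2, let a, b, c ∈ F_{q²} and d ∈ F_{q²} \ F_q, and suppose a² + ab + c ∈ {0, Tr(a + b)²} and a + b + d = 0. Then (x^{q+1} + x² + a·x^q + b·x + c)/(x^q + x + d) is a permutation rational function of F_{q²}. -/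
/-!
Let `σ x = x ^ q`, an involution of `F_{q²}`, and `s = σ d + d`, a nonzero element of `F_q`.
In characteristic two the numerator equals `(x + a) (x ^ q + x + d) + (a² + ab + c)`, so the map
is either `x ↦ x + a` or `x ↦ x + s² / (σ x + x + d) + a`. In the second case, equal values at
`x ≠ y` force `α = σ x + x + d` and `β = σ y + y + d` (so `σ α = α + s`, `σ β = β + s`) to satisfy
`α (α + s) β (β + s) = s³ (α + β + s)`. In characteristic two this says `P · σ P = 0` for
`P = α σ β + s²`; hence `P = σ P = 0`, and `P - σ P = s (α - β)` gives `α = β`, i.e. `x = y`.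
-/

section Involution

variable {K : Type*} [Field K] {σ : K →+* K}

theorem RingHom.map_add_self_add_ne_zero (hσ : Function.Involutive σ) {d : K} (hd : σ d ≠ d)
    (x : K) : σ x + x + d ≠ 0 := by
  intro h
  have h' := congrArg σ h
  rw [map_add, map_add, hσ x, map_zero] at h'
  exact hd (by linear_combination h' - h)

variable [CharP K 2]

theorem RingHom.quartic_ne_of_map_eq_add {s α β : K} (hs : σ s = s) (hs0 : s ≠ 0)
    (hα : σ α = α + s) (hβ : σ β = β + s) (hαβ : α ≠ β) :
    α * (α + s) * β * (β + s) ≠ s ^ 3 * (α + β + s) := by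
  intro h
  have two : (2 : K) = 0 := CharTwo.two_eq_zero
  have hσP : σ (α * (β + s) + s ^ 2) = (α + s) * β + s ^ 2 := by
    rw [map_add, map_mul, map_add, map_pow, hα, hβ, hs]
    linear_combination (α * s + s ^ 2) * two
  have hPQ : (α * (β + s) + s ^ 2) * σ (α * (β + s) + s ^ 2) = 0 := by
    rw [hσP]
    linear_combination h + (s ^ 2 * (α * β + s * (α + β) + s ^ 2)) * two
  have hP : α * (β + s) + s ^ 2 = 0 := by
    rcases mul_eq_zero.1 hPQ with hP | hQ
    · exact hP
    · exact (map_eq_zero σ).1 hQ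
  rw [hP, map_zero] at hσP
  refine hαβ (mul_left_cancel₀ hs0 ?_)
  linear_combination hP - hσP - (α * β + s * β + s ^ 2) * two

theorem RingHom.eq_zero_of_mul_mul_eq {s α β u : K} (hs : σ s = s) (hs0 : s ≠ 0)
    (hα : σ α = α + s) (hβ : σ β = β + s) (hα0 : α ≠ 0) (hβ0 : β ≠ 0)
    (hu : u + σ u = α + β) (h : u * (α * β) = s ^ 2 * (α + β)) : u = 0 := by
  have two : (2 : K) = 0 := CharTwo.two_eq_zero
  by_contra hu0
  have hγ : σ (α + β) = α + β := by
    rw [map_add, hα, hβ]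
    linear_combination s * two
  have hγ0 : α + β ≠ 0 := by
    intro hsum
    rw [hsum, mul_zero] at h
    exact mul_ne_zero hu0 (mul_ne_zero hα0 hβ0) h
  have hσh := congrArg σ h
  rw [map_mul, map_mul, map_mul, map_pow, hγ, hα, hβ, hs] at hσh
  have hquartic : α * (α + s) * β * (β + s) = s ^ 3 * (α + β + s) := by
    refine mul_left_cancel₀ hγ0 ?_
    linear_combination ((α + s) * (β + s)) * h + (α * β) * hσh
      - (α * (α + s) * β * (β + s)) * hu + (α * β * s ^ 2 * (α + β)) * two
  refine RingHom.quartic_ne_of_map_eq_add hs hs0 hα hβ (fun hαβ ↦ hγ0 ?_) hquartic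
  linear_combination hαβ + β * two

theorem RingHom.injective_add_sq_div (hσ : Function.Involutive σ) {d : K} (hd : σ d ≠ d) :
    Function.Injective fun x ↦ x + (σ d + d) ^ 2 / (σ x + x + d) := by
  intro x y hxy
  have two : (2 : K) = 0 := CharTwo.two_eq_zero
  have hD := RingHom.map_add_self_add_ne_zero hσ hd
  have hσD (z : K) : σ (σ z + z + d) = σ z + z + d + (σ d + d) := by
    rw [map_add, map_add, hσ z]
    linear_combination (-d) * two
  have hu : x + y + σ (x + y) = σ x + x + d + (σ y + y + d) := by
    rw [map_add]
    linear_combination (-d) * two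
  have h : (x + y) * ((σ x + x + d) * (σ y + y + d)) =
      (σ d + d) ^ 2 * (σ x + x + d + (σ y + y + d)) := by
    field_simp [hD x, hD y] at hxy
    linear_combination hxy + (y * (σ x + x + d) - (σ d + d) ^ 2) * (σ y + y + d) * two
  have hxy0 := RingHom.eq_zero_of_mul_mul_eq (by rw [map_add, hσ d, add_comm])
    (fun h ↦ hd (by linear_combination h - d * two)) (hσD x) (hσD y) (hD x) (hD y) hu h
  linear_combination hxy0 - y * two

end Involution

theorem stmt13_general (n q : ℕ) (hq : q = 2 ^ n)
    (K : Type) [Field K] [Fintype K] (hK : Fintype.card K = q ^ 2)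
    (a b c d : K) (hd : d ^ q ≠ d)
    (hc : a ^ 2 + a * b + c = 0 ∨
      a ^ 2 + a * b + c = ((a + b) ^ q + (a + b)) ^ 2)
    (habd : a + b + d = 0) :
    Function.Bijective (fun x : K =>
      (x ^ (q + 1) + x ^ 2 + a * x ^ q + b * x + c) / (x ^ q + x + d)) := by
  subst hq
  have : CharP K 2 := charP_of_card_eq_prime_pow (f := n * 2) (by rw [hK, pow_mul])
  have two : (2 : K) = 0 := CharTwo.two_eq_zero
  set σ := iterateFrobenius K 2 n
  have hσ_apply (z : K) : σ z = z ^ 2 ^ n := iterateFrobenius_def 2 n z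
  have hσ : Function.Involutive σ := fun z ↦ by
    rw [hσ_apply, hσ_apply, ← pow_mul, ← sq, ← hK, FiniteField.pow_card]
  rw [← hσ_apply] at hd
  have hf : (fun x : K => (x ^ (2 ^ n + 1) + x ^ 2 + a * x ^ 2 ^ n + b * x + c) /
      (x ^ 2 ^ n + x + d)) = fun x ↦ x + (a ^ 2 + a * b + c) / (σ x + x + d) + a := by
    funext x
    have hD := RingHom.map_add_self_add_ne_zero hσ hd x
    rw [hσ_apply] at hD ⊢
    field_simp
    linear_combination (x - a) * habd - (a + d) * x * two
  rw [hf, ← Finite.injective_iff_bijective]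
  rcases hc with hc | hc
  · simpa [hc] using add_left_injective a
  · rw [hc, ← hσ_apply, (by linear_combination habd - d * two : a + b = d)]
    exact (add_left_injective a).comp (RingHom.injective_add_sq_div hσ hd)

/-- Let `q` be a power of `2`, `a, b, c ∈ F_{q²}`, `d ∈ F_{q²} \ F_q`, with
`a² + ab + c ∈ {0, Tr(a + b)²}` and `a + b + d = 0`. Then
`(x^{q+1} + x² + a·x^q + b·x + c)/(x^q + x + d)` is a permutation rational function of
`F_{q²}`. Here `K` plays the role of `F_{q²}`, `F_q = {x : K | x^q = x}`,
`Tr(x) = x^q + x`, and since `x^q + x + d` has no zero in `F_{q²}`, being a permutation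
rational function is equivalent to the map
`x ↦ (x^{q+1} + x² + a·x^q + b·x + c)/(x^q + x + d)` permuting `F_{q²}`. -/
theorem stmt13 (n q : ℕ) (hn : 0 < n) (hq : q = 2 ^ n)
    (K : Type) [Field K] [Fintype K] (hK : Fintype.card K = q ^ 2)
    (a b c d : K) (hd : d ^ q ≠ d)
    (hc : a ^ 2 + a * b + c = 0 ∨
      a ^ 2 + a * b + c = ((a + b) ^ q + (a + b)) ^ 2)
    (habd : a + b + d = 0) :
    Function.Bijective (fun x : K =>
      (x ^ (q + 1) + x ^ 2 + a * x ^ q + b * x + c) / (x ^ q + x + d)) :=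
  stmt13_general n q hq K hK a b c d hd hc habd
end

section
/- Let q be a power of 2. For all α, β ∈ F_{q²} with Tr(α + β) ≠ 0, the cubic polynomial x³ + Tr(β)·x² + (Tr(α² + αβ) + N(α) + N(β))·x + Tr(α + β)³ + Tr(α)·N(α + β) has exactly one zero in F_q. -/
/-!
Put `T = Tr(α + β) ∈ F_q^×` and `g = (α + β^q) / T`, so that `g^q = g + 1`. The substitution
`x = T w + Tr(β)` turns the cubic into `T³ (w³ + e w + e)` with `e = g² + g + 1`.

Uniqueness: if `w₁ ∈ F_q` is a root, the other two roots are `r = w₁² + g w₁` and `r + w₁ = r^q`,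
and these lie in `F_q` only when `w₁ = 0`, i.e. when all three roots are `0`.

Existence: for a primitive cube root of unity `μ`, `c = g + μ` satisfies `c² + c = e`, and then
`w = z + e / z` is a root as soon as `z³ = e c`. If `q ≡ 1 mod 3` then `c^q = c + 1`, and
`z = c^((q² + q + 1) / 3)` satisfies `z^(q+1) = e`; if `q ≡ 2 mod 3` then `c ∈ F_q`, and `z` can
be taken to be the cube root of `e c` in `F_q`. In both cases `w ∈ F_q`.
-/

theorem cubic_eq_mul_of_eq_zero {R : Type*} [CommRing R] [CharP R 2] {g w₁ : R}
    (h₁ : w₁ ^ 3 + (g ^ 2 + g + 1) * w₁ + (g ^ 2 + g + 1) = 0) (w : R) :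
    w ^ 3 + (g ^ 2 + g + 1) * w + (g ^ 2 + g + 1) =
      (w + w₁) * (w + (w₁ ^ 2 + g * w₁)) * (w + (w₁ ^ 2 + g * w₁ + w₁)) := by
  linear_combination (norm := skip) (w * (w₁ + 1) + w₁ ^ 2 + w₁ + 1) * h₁
  ring_nf
  reduce_mod_char!

/-- In characteristic 2, `(z + e/z)³ + e (z + e/z) = z³ + (e/z)³`, which is `e c + e² / c = e`. -/
theorem cubic_add_div_eq_zero {K : Type*} [Field K] [CharP K 2] {c e z : K}
    (hc : c ^ 2 + c = e) (hz : z ^ 3 = e * c) : (z + e / z) ^ 3 + e * (z + e / z) + e = 0 := by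
  rcases eq_or_ne z 0 with rfl | hz₀
  · obtain rfl : e = 0 := by
      rcases mul_eq_zero.1 (hz.symm.trans (zero_pow three_ne_zero)) with h | rfl
      · exact h
      · simpa using hc.symm
    simp
  · field_simp
    linear_combination (norm := skip) (e + e * c + z ^ 3) * hz + e ^ 2 * hc
    ring_nf
    reduce_mod_char!

section Monoid

variable {M : Type*} {q : ℕ}

theorem pow_one_add_sub_one_mul_eq_self [Monoid M] {x : M} (hx : x ^ q = x) (k : ℕ) :
    x ^ (1 + (q - 1) * k) = x := by
  rcases q with _ | q
  · simp
  induction k with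
  | zero => simp
  | succ k ih =>
    rw [Nat.add_sub_cancel] at ih ⊢
    rw [mul_add_one, ← add_assoc, pow_add, ih, ← pow_succ', hx]

theorem exists_pow_three_eq_of_mod_three_eq_two [Monoid M] {x : M} (hx : x ^ q = x)
    (hq : q % 3 = 2) : ∃ z, z ^ q = z ∧ z ^ 3 = x := by
  refine ⟨x ^ ((2 * q - 1) / 3), by rw [← pow_mul, mul_comm, pow_mul, hx], ?_⟩
  rw [← pow_mul]
  convert pow_one_add_sub_one_mul_eq_self hx 2 using 2
  omega

theorem exists_pow_three_eq_mul_norm [CommMonoid M] {x : M} (hx : x ^ (q ^ 2) = x)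
    (hq : q % 3 = 1) : ∃ z, z ^ 3 = x ^ q * x * x ∧ z ^ q * z = x ^ q * x := by
  obtain ⟨s, hs⟩ : ∃ s, q = 3 * s + 1 := ⟨q / 3, by omega⟩
  have hnorm : (x ^ q * x) ^ q = x ^ q * x := by
    rw [mul_pow, ← pow_mul, ← sq, hx, mul_comm]
  refine ⟨x ^ (1 + (q - 1) * (s + 1)), ?_, ?_⟩
  · have hexp : (1 + (q - 1) * (s + 1)) * 3 = q ^ 2 + q + 1 := by
      subst hs
      rw [Nat.add_sub_cancel]
      ring
    rw [← pow_mul, hexp, pow_succ, pow_add, hx, mul_comm x]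
  · rw [← pow_mul, ← pow_add, ← mul_add_one, mul_comm, pow_mul, pow_succ,
      pow_one_add_sub_one_mul_eq_self hnorm]

end Monoid

theorem two_pow_mod_three (n : ℕ) : 2 ^ n % 3 = 1 ∨ 2 ^ n % 3 = 2 := by
  have : ¬ 3 ∣ 2 ^ n := fun h => by
    have := Nat.prime_three.dvd_of_dvd_pow h
    norm_num at this
  omega

theorem exists_sq_add_self_add_one_eq_zero {K : Type*} [Field K] [Fintype K]
    (h : 3 ∣ Fintype.card K - 1) : ∃ μ : K, μ ^ 2 + μ + 1 = 0 := by
  classical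
  have : Fact (Nat.Prime 3) := ⟨Nat.prime_three⟩
  obtain ⟨μ, hμ⟩ := exists_prime_orderOf_dvd_card (G := Kˣ) 3 (by rwa [Fintype.card_units])
  have hprim : IsPrimitiveRoot (μ : K) 3 :=
    IsPrimitiveRoot.coe_units_iff.2 (hμ ▸ IsPrimitiveRoot.orderOf μ)
  have hsum := hprim.geom_sum_eq_zero (by norm_num)
  simp only [Finset.sum_range_succ, Finset.sum_range_zero] at hsum
  exact ⟨μ, by linear_combination hsum⟩

section Frobenius

variable {K : Type*} [Field K] [CharP K 2] {n : ℕ}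

local notation "q" => 2 ^ n

theorem eq_of_cubic_eq_zero_of_pow_eq_self {g w w₁ : K} (hg : g ^ q = g + 1)
    (hw : w ^ q = w) (hw₁ : w₁ ^ q = w₁)
    (h : w ^ 3 + (g ^ 2 + g + 1) * w + (g ^ 2 + g + 1) = 0)
    (h₁ : w₁ ^ 3 + (g ^ 2 + g + 1) * w₁ + (g ^ 2 + g + 1) = 0) : w = w₁ := by
  set r := w₁ ^ 2 + g * w₁
  have hr : r ^ q = r + w₁ := by
    simp only [r, add_pow_char_pow, mul_pow, pow_right_comm _ 2, hg, hw₁]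
    ring
  rw [cubic_eq_mul_of_eq_zero h₁] at h
  rcases mul_eq_zero.1 h with h | h
  · rcases mul_eq_zero.1 h with h | h
    · exact CharTwo.add_eq_zero.1 h
    · have hwr : w = r := CharTwo.add_eq_zero.1 h
      rw [hwr, hr] at hw
      obtain rfl : w₁ = 0 := add_eq_left.1 hw
      simp [hwr, r]
  · have hwr : w = r + w₁ := CharTwo.add_eq_zero.1 h
    rw [hwr, add_pow_char_pow, hr, hw₁, CharTwo.add_cancel_right] at hw
    obtain rfl : w₁ = 0 := left_eq_add.1 hw
    simp [hwr, r]

theorem pow_add_div_eq_self {z e : K} (he : e ^ q = e) (hz : z ^ q = z ∨ z ^ q * z = e) :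
    (z + e / z) ^ q = z + e / z := by
  rw [add_pow_char_pow, div_pow, he]
  rcases hz with hz | hz
  · rw [hz]
  · rcases eq_or_ne z 0 with rfl | hz₀
    · simp
    · have he₀ : e ≠ 0 := hz ▸ mul_ne_zero (pow_ne_zero _ hz₀) hz₀
      rw [← hz]
      field_simp
      ring

theorem exists_pow_eq_self_cubic_eq_zero [Fintype K] (hK : Fintype.card K = q ^ 2) {g : K}
    (hg : g ^ q = g + 1) :
    ∃ w, w ^ q = w ∧ w ^ 3 + (g ^ 2 + g + 1) * w + (g ^ 2 + g + 1) = 0 := by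
  have h3 : 3 ∣ Fintype.card K - 1 := by
    rw [hK, ← pow_mul, pow_mul']
    exact (Nat.modEq_iff_dvd' (Nat.one_le_pow _ _ (by norm_num))).1
      (by simp [Nat.ModEq, Nat.pow_mod])
  obtain ⟨μ, hμ⟩ := exists_sq_add_self_add_one_eq_zero h3
  set e := g ^ 2 + g + 1
  set c := g + μ
  have hc : c ^ 2 + c = e := by
    linear_combination (norm := skip) hμ
    simp only [c, e]
    ring_nf
    reduce_mod_char!
  have he : e ^ q = e := by
    simp only [e, add_pow_char_pow, pow_right_comm _ 2, hg, one_pow]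
    ring_nf
    reduce_mod_char!
  have hμq : μ ^ q = μ ^ (q % 3) := by
    have hμ₃ : μ ^ 3 = 1 := by linear_combination (μ - 1) * hμ
    conv_lhs => rw [← Nat.div_add_mod q 3, pow_add, pow_mul, hμ₃, one_pow, one_mul]
  suffices ∃ z, z ^ 3 = e * c ∧ (z ^ q = z ∨ z ^ q * z = e) by
    obtain ⟨z, hz, hzq⟩ := this
    exact ⟨z + e / z, pow_add_div_eq_self he hzq, cubic_add_div_eq_zero hc hz⟩
  rcases two_pow_mod_three n with hq | hq
  · have hcq : c ^ q = c + 1 := by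
      rw [add_pow_char_pow, hg, hμq, hq, pow_one]
      ring
    obtain ⟨z, hz, hzq⟩ :=
      exists_pow_three_eq_mul_norm (x := c) (by rw [← hK, FiniteField.pow_card]) hq
    have hnorm : c ^ q * c = e := by rw [hcq, ← hc]; ring
    rw [hnorm] at hz hzq
    exact ⟨z, hz, Or.inr hzq⟩
  · have hcq : c ^ q = c := by
      rw [add_pow_char_pow, hg, hμq, hq]
      linear_combination (norm := skip) hμ
      simp only [c]
      ring_nf
      reduce_mod_char!
    obtain ⟨z, hzq, hz⟩ :=
      exists_pow_three_eq_of_mod_three_eq_two (x := e * c) (by rw [mul_pow, he, hcq]) hq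
    exact ⟨z, hz, Or.inl hzq⟩

theorem existsUnique_pow_eq_self_cubic_eq_zero [Fintype K] (hK : Fintype.card K = q ^ 2)
    {g : K} (hg : g ^ q = g + 1) :
    ∃! w, w ^ q = w ∧ w ^ 3 + (g ^ 2 + g + 1) * w + (g ^ 2 + g + 1) = 0 := by
  obtain ⟨w, hw, h⟩ := exists_pow_eq_self_cubic_eq_zero hK hg
  exact ⟨w, ⟨hw, h⟩, fun v ⟨hv, h'⟩ => eq_of_cubic_eq_zero_of_pow_eq_self hg hv hw h' h⟩

theorem cubic_eq_trace_pow_three_mul {α β T g : K} (hT : T = (α + β) ^ q + (α + β))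
    (hT₀ : T ≠ 0) (hg : g = (α + β ^ q) / T) (w : K) :
    (T * w + (β ^ q + β)) ^ 3 + (β ^ q + β) * (T * w + (β ^ q + β)) ^ 2 +
        (((α ^ 2 + α * β) ^ q + (α ^ 2 + α * β)) + α ^ (q + 1) + β ^ (q + 1)) *
          (T * w + (β ^ q + β)) +
        ((α + β) ^ q + (α + β)) ^ 3 + (α ^ q + α) * (α + β) ^ (q + 1) =
      T ^ 3 * (w ^ 3 + (g ^ 2 + g + 1) * w + (g ^ 2 + g + 1)) := by
  subst hg hT
  field_simp
  simp only [add_pow_char_pow, mul_pow, pow_succ]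
  rw [← sub_eq_zero]
  ring_nf
  reduce_mod_char!

end Frobenius

open Finset
open scoped Classical

theorem stmt14_general (n q : ℕ) (hq : q = 2 ^ n)
    (K : Type) [Field K] [Fintype K] (hK : Fintype.card K = q ^ 2) :
    ∀ α β : K, (α + β) ^ q + (α + β) ≠ 0 →
      (Finset.univ.filter (fun x : K => x ^ q = x ∧
        x ^ 3 + (β ^ q + β) * x ^ 2 +
          (((α ^ 2 + α * β) ^ q + (α ^ 2 + α * β)) + α ^ (q + 1) + β ^ (q + 1)) * x +
          ((α + β) ^ q + (α + β)) ^ 3 + (α ^ q + α) * (α + β) ^ (q + 1) = 0)).card = 1 := by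
  intro α β hT₀
  subst hq
  have : CharP K 2 := charP_of_card_eq_prime_pow (f := n * 2) (by rw [hK, pow_mul])
  have hfix : ∀ x : K, (x ^ 2 ^ n) ^ 2 ^ n = x := fun x => by
    rw [← pow_mul, ← sq, ← hK, FiniteField.pow_card]
  obtain ⟨T, hT⟩ : ∃ T, T = (α + β) ^ 2 ^ n + (α + β) := ⟨_, rfl⟩
  rw [← hT] at hT₀
  have hTq : T ^ 2 ^ n = T := by rw [hT, add_pow_char_pow, hfix, add_comm]
  have hbq : (β ^ 2 ^ n + β) ^ 2 ^ n = β ^ 2 ^ n + β := by rw [add_pow_char_pow, hfix, add_comm]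
  have hg : ((α + β ^ 2 ^ n) / T) ^ 2 ^ n = (α + β ^ 2 ^ n) / T + 1 := by
    rw [div_pow, hTq, add_pow_char_pow, hfix, div_add_one hT₀, hT, add_pow_char_pow]
    ring_nf
    reduce_mod_char!
  rw [← Fintype.existsUnique_iff_card_one]
  refine ((Equiv.mulLeft₀ T hT₀).trans (Equiv.addRight (β ^ 2 ^ n + β))).existsUnique_congr
    (fun w => ?_) |>.1 (existsUnique_pow_eq_self_cubic_eq_zero hK hg)
  simp only [Equiv.trans_apply, Equiv.mulLeft₀_apply, Equiv.coe_addRight]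
  rw [cubic_eq_trace_pow_three_mul hT hT₀ rfl, add_pow_char_pow, mul_pow, hTq, hbq,
    add_left_inj, mul_right_inj' hT₀, mul_eq_zero, or_iff_right (pow_ne_zero 3 hT₀)]

/-- Let `q` be a power of `2`. For all `α, β ∈ F_{q²}` with `Tr(α + β) ≠ 0`,
the cubic `x³ + Tr(β)·x² + (Tr(α² + αβ) + N(α) + N(β))·x + Tr(α + β)³ + Tr(α)·N(α + β)`
has exactly one zero in `F_q`.
Here `K` plays the role of `F_{q²}`, `F_q = {x : K | x^q = x}`, `Tr(x) = x^q + x` and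
`N(x) = x^{q+1}`. -/
theorem stmt14 (n q : ℕ) (hn : 0 < n) (hq : q = 2 ^ n)
    (K : Type) [Field K] [Fintype K] (hK : Fintype.card K = q ^ 2) :
    ∀ α β : K, (α + β) ^ q + (α + β) ≠ 0 →
      (Finset.univ.filter (fun x : K => x ^ q = x ∧
        x ^ 3 + (β ^ q + β) * x ^ 2 +
          (((α ^ 2 + α * β) ^ q + (α ^ 2 + α * β)) + α ^ (q + 1) + β ^ (q + 1)) * x +
          ((α + β) ^ q + (α + β)) ^ 3 + (α ^ q + α) * (α + β) ^ (q + 1) = 0)).card = 1 :=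
  stmt14_general n q hq K hK
end
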